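/- arXiv:2504.17564 — 11 statements merged into one kernel-verified Lean document; each statement's English description precedes it below -/
import Mathlib

section
/- Let k ≥ 2 and n ≥ 1 be integers. Then the number C_k(n) of cycles (including fixed points) in the decomposition of the (k,n)-perfect shuffle permutation σ_{k,n} into a product of disjoint cycles equals the sum, over all divisors d of kn+1 with d ≠ 1, of φ(d)/ord_k(d). (Each term φ(d)/ord_k(d) is an integer since ord_k(d) divides φ(d).) -/
/-- The `(k,n)`-perfect shuffle map `x ↦ k*x mod (k*n+1)` on `{1, …, k*n}`. -/
def shuffleFun (k n : ℕ) (x : {x : ℕ // x ∈ Finset.Icc 1 (k * n)}) :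
    {x : ℕ // x ∈ Finset.Icc 1 (k * n)} :=
  ⟨k * x.1 % (k * n + 1), by
    have hx := Finset.mem_Icc.mp x.2
    have hco : Nat.Coprime (k * n + 1) k :=
      (Nat.coprime_mul_left_add_left 1 k n).mpr (Nat.coprime_one_left k)
    have hlt : k * x.1 % (k * n + 1) < k * n + 1 := Nat.mod_lt _ (Nat.succ_pos _)
    have hne : k * x.1 % (k * n + 1) ≠ 0 := by
      intro h0
      have hdvd : (k * n + 1) ∣ k * x.1 := Nat.dvd_of_mod_eq_zero h0
      have hdx : (k * n + 1) ∣ x.1 := hco.dvd_of_dvd_mul_left hdvd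
      have := Nat.le_of_dvd (by omega) hdx
      omega
    exact Finset.mem_Icc.mpr ⟨by omega, by omega⟩⟩

theorem shuffleFun_bijective (k n : ℕ) : Function.Bijective (shuffleFun k n) := by
  have hinj : Function.Injective (shuffleFun k n) := by
    intro x y hxy
    have h : k * x.1 % (k * n + 1) = k * y.1 % (k * n + 1) := congrArg Subtype.val hxy
    have hx := Finset.mem_Icc.mp x.2
    have hy := Finset.mem_Icc.mp y.2
    have hco : Nat.Coprime (k * n + 1) k :=
      (Nat.coprime_mul_left_add_left 1 k n).mpr (Nat.coprime_one_left k)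
    have hmod : x.1 % (k * n + 1) = y.1 % (k * n + 1) :=
      Nat.ModEq.cancel_left_of_coprime hco h
    rw [Nat.mod_eq_of_lt (by omega), Nat.mod_eq_of_lt (by omega)] at hmod
    exact Subtype.ext hmod
  exact Finite.injective_iff_bijective.mp hinj

/-- The `(k,n)`-perfect shuffle permutation `σ_{k,n}` of `{1, …, k*n}`. -/
noncomputable def pshuffle (k n : ℕ) : Equiv.Perm {x : ℕ // x ∈ Finset.Icc 1 (k * n)} :=
  Equiv.ofBijective _ (shuffleFun_bijective k n)

/-- The setoid on `α` identifying points on the same cycle (orbit) of `σ`. -/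
def sameCycleSetoid {α : Type*} (σ : Equiv.Perm α) : Setoid α :=
  ⟨σ.SameCycle, ⟨Equiv.Perm.SameCycle.refl σ, fun h => h.symm, fun h h' => h.trans h'⟩⟩

/-- The number of cycles (orbits, including fixed points) of a permutation. -/
noncomputable def cycleCount {α : Type*} (σ : Equiv.Perm α) : ℕ :=
  Nat.card (Quotient (sameCycleSetoid σ))


/-!
Put `m = k * n + 1`. Multiplication by `k` is invertible mod `m` and preserves the reduced
denominator `d` of `x / m`, so each cycle of `σ_{k,n}` lies among the points with a fixed
denominator `d ∣ m`, `d ≠ 1`. These are the points `c * u` with `c = m / d` and `u` a unit mod `d`,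
and on them `σ_{k,n}` acts as `u ↦ u * k`. The cycles of right multiplication by `k` in
`(ZMod d)ˣ` are the cosets of `⟨k⟩`, and there are `φ(d) / ord_k(d)` of them.
-/

open Equiv

section CycleCount

variable {α β : Type*}

theorem cycleCount_eq_of_semiconj {σ : Perm α} {τ : Perm β} (e : α ≃ β)
    (h : Function.Semiconj e σ τ) : cycleCount σ = cycleCount τ := by
  have hτ : τ = e.permCongrHom σ := Equiv.ext fun b => by simpa using (h (e.symm b)).symm
  refine Nat.card_congr (Quotient.congr e fun x y => exists_congr fun i => ?_)
  rw [hτ, ← map_zpow]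
  simp [Equiv.permCongrHom, Equiv.permCongr_apply]

theorem cycleCount_eq_sum_fiber [Finite α] {ι : Type*} [DecidableEq ι] {σ : Perm α} (f : α → ι)
    (hf : ∀ x, f (σ x) = f x) (s : Finset ι) (hs : ∀ x, f x ∈ s) :
    cycleCount σ = ∑ i ∈ s, cycleCount (σ.subtypePerm (p := fun x => f x = i)
      fun x => by rw [hf]) := by
  have hconst : ∀ x y, σ.SameCycle x y → f x = f y := by
    rintro x _ ⟨i, rfl⟩
    induction i using Int.induction_on with
    | zero => rfl
    | succ i ih => rw [add_comm, zpow_one_add, Perm.mul_apply, hf, ih]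
    | pred i ih =>
      rw [ih, sub_eq_neg_add, zpow_add, zpow_neg_one, Perm.mul_apply, ← hf (σ⁻¹ _),
        Perm.coe_inv, apply_symm_apply]
  let F : Quotient (sameCycleSetoid σ) → ι := Quotient.lift f hconst
  have : Fintype (Quotient (sameCycleSetoid σ)) := Fintype.ofFinite _
  rw [cycleCount, Nat.card_eq_fintype_card, ← Finset.card_univ,
    Finset.card_eq_sum_card_fiberwise (f := F) fun q _ => q.inductionOn hs]
  refine Finset.sum_congr rfl fun i _ => ?_
  rw [← Fintype.card_subtype, ← Nat.card_eq_fintype_card]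
  exact Nat.card_congr (Equiv.subtypeQuotientEquivQuotientSubtype _ (fun q => F q = i)
    (fun _ => Iff.rfl) fun _ _ => Perm.sameCycle_subtypePerm)

theorem cycleCount_mulRight {G : Type*} [Group G] [Finite G] (g : G) :
    cycleCount (Equiv.mulRight g) = Nat.card G / orderOf g := by
  have hcosets : cycleCount (Equiv.mulRight g) = (Subgroup.zpowers g).index := by
    refine Nat.card_congr (Quotient.congrRight fun x y => ?_)
    change (Equiv.mulRight g).SameCycle x y ↔ _
    simp only [Perm.SameCycle, Equiv.zpow_mulRight, Equiv.coe_mulRight,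
      QuotientGroup.leftRel_apply, Subgroup.mem_zpowers_iff, eq_inv_mul_iff_mul_eq]
  rw [hcosets, ← Subgroup.index_mul_card (Subgroup.zpowers g), Nat.card_zpowers,
    Nat.mul_div_cancel _ (orderOf_pos g)]

end CycleCount

theorem Nat.coprime_mul_add_one (k n : ℕ) : k.Coprime (k * n + 1) :=
  (Nat.coprime_mul_left_add_right k 1 n).mpr (Nat.coprime_one_right k)

theorem Nat.gcd_mul_mod_of_coprime {k m : ℕ} (hk : k.Coprime m) (x : ℕ) :
    Nat.gcd (k * x % m) m = Nat.gcd x m := by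
  rw [← Nat.gcd_rec, Nat.gcd_comm, Nat.Coprime.gcd_mul_left_cancel x hk]

theorem Nat.gcd_mul_val_coe_unit {d : ℕ} (c : ℕ) (u : (ZMod d)ˣ) :
    Nat.gcd (c * (u : ZMod d).val) (c * d) = c := by
  rw [Nat.gcd_mul_left, ZMod.val_coe_unit_coprime u, mul_one]

theorem ZMod.val_coe_unit_pos {d : ℕ} (hd : d ≠ 1) (u : (ZMod d)ˣ) : 0 < (u : ZMod d).val := by
  have hu := ZMod.val_coe_unit_coprime u
  refine Nat.pos_of_ne_zero fun h => hd ?_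
  rwa [h, Nat.coprime_zero_left] at hu

theorem ZMod.orderOf_natCast_dvd_totient {k d : ℕ} (hk : k.Coprime d) :
    orderOf (k : ZMod d) ∣ d.totient :=
  orderOf_dvd_of_pow_eq_one <| by
    simpa only [Units.val_pow_eq_pow_val, ZMod.coe_unitOfCoprime, Units.val_one] using
      congrArg Units.val (ZMod.pow_totient (ZMod.unitOfCoprime k hk))

section PerfectShuffle

variable {k n c d : ℕ}

/-- The denominator of `x / (k * n + 1)` in lowest terms. -/
def shuffleDen (k n : ℕ) (x : {x : ℕ // x ∈ Finset.Icc 1 (k * n)}) : ℕ :=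
  (k * n + 1) / Nat.gcd x (k * n + 1)

theorem shuffleDen_pshuffle (x : {x : ℕ // x ∈ Finset.Icc 1 (k * n)}) :
    shuffleDen k n (pshuffle k n x) = shuffleDen k n x := by
  rw [shuffleDen, show (pshuffle k n x : ℕ) = k * x % (k * n + 1) from rfl,
    Nat.gcd_mul_mod_of_coprime (Nat.coprime_mul_add_one k n), shuffleDen]

theorem shuffleDen_mem (x : {x : ℕ // x ∈ Finset.Icc 1 (k * n)}) :
    shuffleDen k n x ∈ (k * n + 1).divisors.filter (· ≠ 1) := by
  have hx := Finset.mem_Icc.mp x.2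
  have hg : Nat.gcd x (k * n + 1) < k * n + 1 :=
    (Nat.le_of_dvd (by omega) (Nat.gcd_dvd_left _ _)).trans_lt (by omega)
  simp only [Finset.mem_filter, Nat.mem_divisors, shuffleDen]
  refine ⟨⟨Nat.div_dvd_of_dvd (Nat.gcd_dvd_right _ _), by omega⟩, fun h => ?_⟩
  rw [Nat.div_eq_iff_eq_mul_left (Nat.gcd_pos_of_pos_right _ (by omega))
    (Nat.gcd_dvd_right _ _), one_mul] at h
  omega

theorem ne_zero_of_mul_eq_add_one (hcd : c * d = k * n + 1) : c ≠ 0 ∧ d ≠ 0 :=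
  mul_ne_zero_iff.mp (hcd.trans_ne (Nat.succ_ne_zero _))

noncomputable def pshuffleFiber (k n d : ℕ) : Perm {x // shuffleDen k n x = d} :=
  (pshuffle k n).subtypePerm fun x => by rw [shuffleDen_pshuffle]

theorem mul_val_coe_unit_mem_Icc (hcd : c * d = k * n + 1) (hd : d ≠ 1) (u : (ZMod d)ˣ) :
    c * (u : ZMod d).val ∈ Finset.Icc 1 (k * n) := by
  have : NeZero d := ⟨(ne_zero_of_mul_eq_add_one hcd).2⟩
  have hc : 0 < c := Nat.pos_of_ne_zero (ne_zero_of_mul_eq_add_one hcd).1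
  have hlt : c * (u : ZMod d).val < c * d := Nat.mul_lt_mul_of_pos_left (ZMod.val_lt _) hc
  exact Finset.mem_Icc.mpr ⟨Nat.mul_pos hc (ZMod.val_coe_unit_pos hd u), by omega⟩

theorem shuffleDen_mul_val_coe_unit (hcd : c * d = k * n + 1) (hd : d ≠ 1) (u : (ZMod d)ˣ) :
    shuffleDen k n ⟨_, mul_val_coe_unit_mem_Icc hcd hd u⟩ = d := by
  have hc : 0 < c := Nat.pos_of_ne_zero (ne_zero_of_mul_eq_add_one hcd).1
  rw [shuffleDen, ← hcd, Nat.gcd_mul_val_coe_unit, Nat.mul_div_cancel_left d hc]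

noncomputable def unitsToShuffleFiber (hcd : c * d = k * n + 1) (hd : d ≠ 1) (u : (ZMod d)ˣ) :
    {x // shuffleDen k n x = d} :=
  ⟨⟨_, mul_val_coe_unit_mem_Icc hcd hd u⟩, shuffleDen_mul_val_coe_unit hcd hd u⟩

theorem unitsToShuffleFiber_injective (hcd : c * d = k * n + 1) (hd : d ≠ 1) :
    Function.Injective (unitsToShuffleFiber hcd hd) := by
  have : NeZero d := ⟨(ne_zero_of_mul_eq_add_one hcd).2⟩
  have hc : 0 < c := Nat.pos_of_ne_zero (ne_zero_of_mul_eq_add_one hcd).1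
  intro u v h
  have hval : c * (u : ZMod d).val = c * (v : ZMod d).val := congrArg (fun x => x.1.1) h
  exact Units.ext (ZMod.val_injective d (Nat.eq_of_mul_eq_mul_left hc hval))

theorem unitsToShuffleFiber_surjective (hcd : c * d = k * n + 1) (hd : d ≠ 1) :
    Function.Surjective (unitsToShuffleFiber hcd hd) := by
  rintro ⟨x, hx⟩
  have : NeZero d := ⟨(ne_zero_of_mul_eq_add_one hcd).2⟩
  have hxlt : x.1 < c * d := hcd ▸ Nat.lt_succ_of_le (Finset.mem_Icc.mp x.2).2
  have hg : Nat.gcd x (k * n + 1) = c := by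
    have := Nat.mul_div_cancel' (Nat.gcd_dvd_right x.1 (k * n + 1))
    rw [← shuffleDen, hx] at this
    exact Nat.eq_of_mul_eq_mul_right (Nat.pos_of_ne_zero (NeZero.ne d)) (this.trans hcd.symm)
  have hcop : (x.1 / c).Coprime d := by
    have := Nat.coprime_div_gcd_div_gcd (m := x.1) (n := k * n + 1)
      (Nat.gcd_pos_of_pos_right _ (Nat.succ_pos _))
    rwa [← shuffleDen, hx, hg] at this
  refine ⟨ZMod.unitOfCoprime _ hcop, Subtype.ext (Subtype.ext ?_)⟩
  change c * (x.1 / c : ZMod d).val = x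
  rw [ZMod.val_natCast, Nat.mod_eq_of_lt (Nat.div_lt_of_lt_mul hxlt)]
  exact Nat.mul_div_cancel' (hg ▸ Nat.gcd_dvd_left x.1 (k * n + 1))

theorem unitsToShuffleFiber_semiconj (hcd : c * d = k * n + 1) (hd : d ≠ 1) :
    Function.Semiconj (unitsToShuffleFiber hcd hd) (Equiv.mulRight (ZMod.unitOfCoprime k
      ((Nat.coprime_mul_add_one k n).coprime_dvd_right (Dvd.intro_left c hcd))))
      (pshuffleFiber k n d) := by
  intro u
  apply Subtype.ext; apply Subtype.ext
  change c * (u * (k : ZMod d)).val = k * (c * (u : ZMod d).val) % (k * n + 1)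
  rw [ZMod.val_mul, ZMod.val_natCast, Nat.mul_mod_mod, ← hcd, ← Nat.mul_mod_mul_left]
  ring_nf

theorem cycleCount_pshuffleFiber (hcd : c * d = k * n + 1) (hd : d ≠ 1) :
    cycleCount (pshuffleFiber k n d) = d.totient / orderOf (k : ZMod d) := by
  have : NeZero d := ⟨(ne_zero_of_mul_eq_add_one hcd).2⟩
  rw [← cycleCount_eq_of_semiconj (Equiv.ofBijective _ ⟨unitsToShuffleFiber_injective hcd hd,
      unitsToShuffleFiber_surjective hcd hd⟩) (unitsToShuffleFiber_semiconj hcd hd),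
    cycleCount_mulRight, Nat.card_eq_fintype_card, ZMod.card_units_eq_totient, ← orderOf_units,
    ZMod.coe_unitOfCoprime]

end PerfectShuffle

theorem perfect_shuffle_cycle_count_general (k n : ℕ) :
    (∀ d ∈ (k * n + 1).divisors.filter (· ≠ 1), orderOf (k : ZMod d) ∣ Nat.totient d) ∧
    cycleCount (pshuffle k n) =
      ∑ d ∈ (k * n + 1).divisors.filter (· ≠ 1),
        Nat.totient d / orderOf (k : ZMod d) := by
  have hdvd : ∀ d ∈ (k * n + 1).divisors.filter (· ≠ 1), d ∣ k * n + 1 :=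
    fun d hd => Nat.dvd_of_mem_divisors (Finset.mem_filter.mp hd).1
  refine ⟨fun d hd => ZMod.orderOf_natCast_dvd_totient
    ((Nat.coprime_mul_add_one k n).coprime_dvd_right (hdvd d hd)), ?_⟩
  rw [cycleCount_eq_sum_fiber (shuffleDen k n) shuffleDen_pshuffle _ shuffleDen_mem]
  exact Finset.sum_congr rfl fun d hd =>
    cycleCount_pshuffleFiber (Nat.div_mul_cancel (hdvd d hd)) (Finset.mem_filter.mp hd).2

theorem perfect_shuffle_cycle_count (k n : ℕ) (hk : 2 ≤ k) (hn : 1 ≤ n) :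
    (∀ d ∈ (k * n + 1).divisors.filter (· ≠ 1), orderOf (k : ZMod d) ∣ Nat.totient d) ∧
    cycleCount (pshuffle k n) =
      ∑ d ∈ (k * n + 1).divisors.filter (· ≠ 1),
        Nat.totient d / orderOf (k : ZMod d) :=
  perfect_shuffle_cycle_count_general k n
end

section
/- Let k ≥ 2 and n ≥ 1 be integers and let x ∈ {1, …, kn}. Then the cardinality of the orbit of x under the (k,n)-perfect shuffle permutation σ_{k,n} (equivalently, the length of the cycle of σ_{k,n} containing x) equals ord_k((kn+1)/gcd(x, kn+1)). -/
theorem Nat.mul_modEq_self_iff_modEq_one {m a c : ℕ} (hm : 0 < m) :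
    c * a ≡ a [MOD m] ↔ c ≡ 1 [MOD m / m.gcd a] := by
  refine ⟨fun h => Nat.ModEq.cancel_right_div_gcd hm (by rwa [one_mul]), fun h => ?_⟩
  obtain ⟨b, hb⟩ := Nat.gcd_dvd_right m a
  have := (h.mul_right' (m.gcd a)).mul_right b
  rwa [Nat.div_mul_cancel (Nat.gcd_dvd_left m a), mul_assoc, mul_assoc, one_mul, ← hb] at this

theorem Function.minimalPeriod_eq_orderOf {α G : Type*} [Monoid G] {f : α → α} {x : α} {a : G}
    (h : ∀ t : ℕ, f^[t] x = x ↔ a ^ t = 1) : minimalPeriod f x = orderOf a := by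
  rw [orderOf, minimalPeriod_eq_minimalPeriod_iff]
  exact fun t => (h t).trans (isPeriodicPt_mul_iff_pow_eq_one a).symm

theorem Equiv.Perm.card_sameCycle_eq_minimalPeriod {α : Type*} (σ : Equiv.Perm α) (x : α) :
    Nat.card {y // σ.SameCycle x y} = Function.minimalPeriod σ x := by
  have hmem : ∀ y, σ.SameCycle x y ↔ y ∈ MulAction.orbit (Subgroup.zpowers σ) x := fun y =>
    ⟨fun ⟨i, hi⟩ => ⟨⟨σ ^ i, i, rfl⟩, hi⟩, fun ⟨⟨_, i, rfl⟩, hi⟩ => ⟨i, hi⟩⟩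
  rw [Nat.card_congr (Equiv.subtypeEquivRight hmem),
    Nat.card_congr (MulAction.orbitZPowersEquiv σ x), Nat.card_zmod]
  rfl

theorem pshuffle_pow_apply_val (k n t : ℕ) (x : {x : ℕ // x ∈ Finset.Icc 1 (k * n)}) :
    ((pshuffle k n ^ t) x).1 = k ^ t * x.1 % (k * n + 1) := by
  induction t with
  | zero =>
    have := (Finset.mem_Icc.mp x.2).2
    simp [Nat.mod_eq_of_lt (show x.1 < k * n + 1 by omega)]
  | succ t ih =>
    rw [pow_succ', Equiv.Perm.mul_apply]
    change k * ((pshuffle k n ^ t) x).1 % (k * n + 1) = _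
    rw [ih, Nat.mul_mod_mod, ← mul_assoc, ← pow_succ']

theorem pshuffle_pow_apply_eq_self_iff (k n t : ℕ) (x : {x : ℕ // x ∈ Finset.Icc 1 (k * n)}) :
    (pshuffle k n ^ t) x = x ↔ k ^ t * x.1 ≡ x.1 [MOD k * n + 1] := by
  have := (Finset.mem_Icc.mp x.2).2
  rw [Subtype.ext_iff, pshuffle_pow_apply_val, Nat.ModEq,
    Nat.mod_eq_of_lt (show x.1 < k * n + 1 by omega)]

theorem perfect_shuffle_orbit_card_general (k n : ℕ)
    (x : {x : ℕ // x ∈ Finset.Icc 1 (k * n)}) :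
    Nat.card {y // (pshuffle k n).SameCycle x y} =
      orderOf ((k : ZMod ((k * n + 1) / Nat.gcd x.1 (k * n + 1)))) := by
  rw [Equiv.Perm.card_sameCycle_eq_minimalPeriod, Nat.gcd_comm]
  refine Function.minimalPeriod_eq_orderOf fun t => ?_
  rw [Equiv.Perm.iterate_eq_pow, pshuffle_pow_apply_eq_self_iff,
    Nat.mul_modEq_self_iff_modEq_one (Nat.succ_pos _), ← ZMod.natCast_eq_natCast_iff,
    Nat.cast_pow, Nat.cast_one]

theorem perfect_shuffle_orbit_card (k n : ℕ) (hk : 2 ≤ k) (hn : 1 ≤ n)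
    (x : {x : ℕ // x ∈ Finset.Icc 1 (k * n)}) :
    Nat.card {y // (pshuffle k n).SameCycle x y} =
      orderOf ((k : ZMod ((k * n + 1) / Nat.gcd x.1 (k * n + 1)))) :=
  perfect_shuffle_orbit_card_general k n x
end

section
/- Let k ≥ 2, n ≥ 1 and r ≥ 1 be integers. A tuple (a_0, a_1, …, a_{r−1}) of elements of {1, …, kn} is a cycle of the (k,n)-perfect shuffle permutation σ_{k,n} (that is, a_{i+1} = σ_{k,n}(a_i) for 0 ≤ i < r−1, σ_{k,n}(a_{r−1}) = a_0, and the a_i are pairwise distinct) if and only if there exist a divisor d of kn+1 with d ≠ 1 and an integer a ∈ {1, …, d−1} with gcd(a, d) = 1 such that r = ord_k(d) and a_i ≡ a·((kn+1)/d)·k^i (mod kn+1) for every i ∈ {0, …, r−1}. -/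
/-! A cycle of `x ↦ k x mod N`, `N = kn+1`, is the orbit `a_i ≡ x kⁱ` of its first entry `x`.
Writing `x = b (N/d)` with `N/d = gcd(x, N)` and `b` a unit mod `d`, one has
`x kⁱ ≡ x kʲ (mod N)` iff `kⁱ ≡ kʲ (mod d)` iff `i ≡ j (mod ord_k d)`, so the orbit closes up
exactly after `ord_k d` steps. -/

theorem Nat.eq_of_forall_modEq_iff_modEq {r t : ℕ} (h : ∀ i j, i ≡ j [MOD r] ↔ i ≡ j [MOD t]) :
    r = t :=
  Nat.dvd_antisymm (Nat.modEq_zero_iff_dvd.mp ((h t 0).mpr (Nat.modEq_zero_iff_dvd.mpr dvd_rfl)))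
    (Nat.modEq_zero_iff_dvd.mp ((h r 0).mp (Nat.modEq_zero_iff_dvd.mpr dvd_rfl)))

theorem Nat.exists_coprime_mul_div_eq {x N : ℕ} (hx : 0 < x) (hxN : x < N) :
    ∃ d, d ∣ N ∧ d ≠ 1 ∧ ∃ b, 1 ≤ b ∧ b ≤ d - 1 ∧ Nat.gcd b d = 1 ∧ x = b * (N / d) := by
  set g := Nat.gcd x N
  have hg : 0 < g := Nat.gcd_pos_of_pos_left N hx
  have hgN : N / (N / g) = g := Nat.div_div_self (Nat.gcd_dvd_right x N) (by omega)
  have hbg : x / g * g = x := Nat.div_mul_cancel (Nat.gcd_dvd_left x N)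
  have hdg : N / g * g = N := Nat.div_mul_cancel (Nat.gcd_dvd_right x N)
  have hlt : x / g < N / g := by
    by_contra! h
    nlinarith [Nat.mul_le_mul_right g h]
  refine ⟨N / g, Nat.div_dvd_of_dvd (Nat.gcd_dvd_right x N), ?_, x / g, ?_,
    Nat.le_sub_one_of_lt hlt, Nat.coprime_div_gcd_div_gcd hg, by rw [hgN, hbg]⟩
  · intro h
    rw [h, one_mul] at hdg
    exact absurd (Nat.le_of_dvd hx (Nat.gcd_dvd_left x N)) (by omega)
  · exact Nat.div_pos (Nat.le_of_dvd hx (Nat.gcd_dvd_left x N)) hg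

theorem Nat.mul_div_mul_pow_modEq_iff_modEq_orderOf {N d b k : ℕ} (hN : 0 < N) (hd : d ∣ N)
    (hb : Nat.Coprime b d) (hk : Nat.Coprime k d) (i j : ℕ) :
    b * (N / d) * k ^ i ≡ b * (N / d) * k ^ j [MOD N] ↔ i ≡ j [MOD orderOf (k : ZMod d)] := by
  obtain ⟨g, rfl⟩ := hd
  have hd : 0 < d := Nat.pos_of_mul_pos_right hN
  have hg : g ≠ 0 := by rintro rfl; simp at hN
  have : NeZero d := ⟨hd.ne'⟩
  have hunit : IsOfFinOrder (k : ZMod d) := ((ZMod.isUnit_iff_coprime k d).mpr hk).isOfFinOrder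
  rw [Nat.mul_div_cancel_left g hd, ← hunit.pow_eq_pow_iff_modEq, ← Nat.cast_pow, ← Nat.cast_pow,
    ZMod.natCast_eq_natCast_iff, mul_right_comm b g, mul_right_comm b g,
    Nat.ModEq.mul_right_cancel_iff' hg]
  exact ⟨Nat.ModEq.cancel_left_of_coprime (Nat.coprime_comm.mp hb), fun h => h.mul_left b⟩

theorem mul_mod_recurrence_iff_modEq_mul_pow {N k r : ℕ} (hr : 0 < r) (a : Fin r → ℕ)
    (ha : ∀ i, a i < N) :
    (∀ i : Fin r, a ⟨(i.1 + 1) % r, Nat.mod_lt _ hr⟩ = k * a i % N) ↔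
      ∀ m, a ⟨m % r, Nat.mod_lt _ hr⟩ ≡ a ⟨0, hr⟩ * k ^ m [MOD N] := by
  constructor
  · intro hrec m
    induction m with
    | zero => simp only [Nat.zero_mod, pow_zero, mul_one]; rfl
    | succ m ih =>
      have hstep := hrec ⟨m % r, Nat.mod_lt _ hr⟩
      simp only [Nat.mod_add_mod] at hstep
      calc a ⟨(m + 1) % r, _⟩ = k * a ⟨m % r, _⟩ % N := hstep
        _ ≡ k * a ⟨m % r, _⟩ [MOD N] := Nat.mod_modEq _ _
        _ ≡ k * (a ⟨0, hr⟩ * k ^ m) [MOD N] := ih.mul_left k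
        _ = a ⟨0, hr⟩ * k ^ (m + 1) := by ring
  · intro horbit i
    have hi := horbit i
    simp only [Nat.mod_eq_of_lt i.2] at hi
    refine Nat.ModEq.eq_of_lt_of_lt ?_ (ha _) (Nat.mod_lt _ (Nat.zero_lt_of_lt (ha i)))
    calc a ⟨(i + 1) % r, _⟩ ≡ a ⟨0, hr⟩ * k ^ (i.1 + 1) [MOD N] := horbit (i + 1)
      _ = k * (a ⟨0, hr⟩ * k ^ i.1) := by ring
      _ ≡ k * a i [MOD N] := (hi.mul_left k).symm
      _ ≡ k * a i % N [MOD N] := (Nat.mod_modEq _ _).symm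

theorem eq_iff_modEq_of_forall_modEq_mul_pow {N k r x : ℕ} (hr : 0 < r) {a : Fin r → ℕ}
    (ha : ∀ i, a i < N) (horbit : ∀ m, a ⟨m % r, Nat.mod_lt _ hr⟩ ≡ x * k ^ m [MOD N]) (i j : ℕ) :
    a ⟨i % r, Nat.mod_lt _ hr⟩ = a ⟨j % r, Nat.mod_lt _ hr⟩ ↔ x * k ^ i ≡ x * k ^ j [MOD N] :=
  ⟨fun h => (horbit i).symm.trans (h ▸ horbit j),
    fun h => ((horbit i).trans (h.trans (horbit j).symm)).eq_of_lt_of_lt (ha _) (ha _)⟩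

theorem perfect_shuffle_cycle_description (k n r : ℕ) (hr : 1 ≤ r)
    (a : Fin r → ℕ) (ha : ∀ i, a i ∈ Finset.Icc 1 (k * n)) :
    ((∀ i : Fin r, a ⟨(i.1 + 1) % r, Nat.mod_lt _ (by omega)⟩ = k * a i % (k * n + 1)) ∧
        Function.Injective a) ↔
      ∃ d, d ∣ k * n + 1 ∧ d ≠ 1 ∧
        ∃ b, 1 ≤ b ∧ b ≤ d - 1 ∧ Nat.gcd b d = 1 ∧ r = orderOf (k : ZMod d) ∧
          ∀ i : Fin r, a i ≡ b * ((k * n + 1) / d) * k ^ (i : ℕ) [MOD k * n + 1] := by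
  have hr0 : 0 < r := hr
  have hN : 0 < k * n + 1 := Nat.succ_pos _
  have hkN : Nat.Coprime k (k * n + 1) :=
    ((Nat.coprime_mul_left_add_left 1 k n).mpr (Nat.coprime_one_left k)).symm
  have ha' : ∀ i, a i < k * n + 1 := fun i => Nat.lt_succ_of_le (Finset.mem_Icc.mp (ha i)).2
  rw [mul_mod_recurrence_iff_modEq_mul_pow hr0 a ha']
  constructor
  · rintro ⟨horbit, hinj⟩
    obtain ⟨d, hdN, hd1, b, hb1, hbd, hcop, hx⟩ :=
      Nat.exists_coprime_mul_div_eq (Finset.mem_Icc.mp (ha ⟨0, hr0⟩)).1 (ha' ⟨0, hr0⟩)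
    have hkey :=
      Nat.mul_div_mul_pow_modEq_iff_modEq_orderOf hN hdN hcop (hkN.coprime_dvd_right hdN)
    rw [← hx] at hkey
    refine ⟨d, hdN, hd1, b, hb1, hbd, hcop, Nat.eq_of_forall_modEq_iff_modEq fun i j => ?_,
      fun i => ?_⟩
    · rw [← hkey, ← eq_iff_modEq_of_forall_modEq_mul_pow hr0 ha' horbit, hinj.eq_iff,
        Fin.mk.injEq]
      rfl
    · have hi := horbit i
      simp only [Nat.mod_eq_of_lt i.2] at hi
      rwa [← hx]
  · rintro ⟨d, hdN, -, b, -, -, hcop, rfl, hcong⟩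
    have hkey :=
      Nat.mul_div_mul_pow_modEq_iff_modEq_orderOf hN hdN hcop (hkN.coprime_dvd_right hdN)
    have hx := hcong ⟨0, hr0⟩
    rw [pow_zero, mul_one] at hx
    refine ⟨fun m => ?_, fun i j hij => Fin.ext ?_⟩
    · calc a ⟨m % _, _⟩ ≡ b * ((k * n + 1) / d) * k ^ (m % _) [MOD k * n + 1] := hcong _
        _ ≡ b * ((k * n + 1) / d) * k ^ m [MOD k * n + 1] := (hkey _ _).mpr (Nat.mod_modEq _ _)
        _ ≡ a ⟨0, hr0⟩ * k ^ m [MOD k * n + 1] := hx.symm.mul_right _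
    · exact ((hkey i j).mp ((hcong i).symm.trans (hij ▸ hcong j))).eq_of_lt_of_lt i.2 j.2
end

section
/- Let k ≥ 2 and n ≥ 1 be integers. Then the number of inversions of the (k,n)-perfect shuffle permutation σ_{k,n}, i.e., the number of pairs (i, j) with 1 ≤ i < j ≤ kn and σ_{k,n}(i) > σ_{k,n}(j), equals ((k−1)k/2)·(n(n+1)/2). -/
open Finset

lemma Finset.card_product_filter_le {α : Type*} [LinearOrder α] (s : Finset α) :
    #{x ∈ s ×ˢ s | x.1 ≤ x.2} = (#s + 1).choose 2 := by
  have hsplit : {x ∈ s ×ˢ s | x.1 ≤ x.2} = {x ∈ s ×ˢ s | x.1 < x.2} ∪ s.diag := by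
    ext ⟨a, b⟩
    simp only [mem_union, mem_filter, mem_product, mem_diag]
    grind
  have hdisj : Disjoint {x ∈ s ×ˢ s | x.1 < x.2} s.diag := by
    simp only [disjoint_left, mem_filter, mem_diag]
    grind
  rw [hsplit, card_union_of_disjoint hdisj, card_product_filter_lt, diag_card,
    Nat.choose_succ_succ, Nat.choose_one_right, add_comm]

namespace Nat

lemma mul_add_lt_mul_add_iff {n a b u v : ℕ} (hu : u < n) (hv : v < n) :
    a * n + u < b * n + v ↔ a < b ∨ a = b ∧ u < v := by
  constructor
  · intro h
    rcases lt_trichotomy a b with hab | rfl | hab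
    · exact Or.inl hab
    · exact Or.inr ⟨rfl, by omega⟩
    · have := Nat.mul_le_mul_right n hab
      rw [Nat.succ_mul] at this
      omega
  · rintro (hab | ⟨rfl, huv⟩)
    · have := Nat.mul_le_mul_right n hab
      rw [Nat.succ_mul] at this
      omega
    · omega

lemma mul_add_div_of_lt {n c u : ℕ} (hu : u < n) : (c * n + u) / n = c := by
  rw [Nat.mul_comm, Nat.mul_add_div (by omega), Nat.div_eq_of_lt hu, Nat.add_zero]

end Nat

section PerfectShuffle

variable {k n c d u v : ℕ}

lemma shuffle_mul_add (hc : c < k) (hu : u < n) :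
    k * (c * n + u + 1) % (k * n + 1) = u * k + (k - 1 - c) + 1 := by
  have hdecomp : k * (c * n + u + 1) = c * (k * n + 1) + (u * k + (k - 1 - c) + 1) := by
    zify [show c ≤ k - 1 by omega, show 1 ≤ k by omega]
    ring
  have hlt : u * k + (k - 1 - c) + 1 < k * n + 1 := by
    have := Nat.mul_le_mul_right k (show u + 1 ≤ n from hu)
    rw [Nat.succ_mul] at this
    rw [Nat.mul_comm k n]
    omega
  rw [hdecomp, Nat.mul_add_mod', Nat.mod_eq_of_lt hlt]

lemma shuffle_inversion_iff (hc : c < k) (hd : d < k) (hu : u < n) (hv : v < n) :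
    (c * n + u + 1 < d * n + v + 1 ∧
        k * (d * n + v + 1) % (k * n + 1) < k * (c * n + u + 1) % (k * n + 1)) ↔
      c < d ∧ v ≤ u := by
  rw [shuffle_mul_add hc hu, shuffle_mul_add hd hv, add_lt_add_iff_right, add_lt_add_iff_right,
    Nat.mul_add_lt_mul_add_iff hu hv,
    Nat.mul_add_lt_mul_add_iff (show k - 1 - d < k by omega) (show k - 1 - c < k by omega)]
  omega

lemma mul_add_one_mem_Icc (hc : c < k) (hu : u < n) : c * n + u + 1 ∈ Icc 1 (k * n) := by
  have := Nat.mul_le_mul_right n (show c + 1 ≤ k from hc)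
  rw [Nat.succ_mul] at this
  rw [mem_Icc]
  omega

lemma digits_of_mem_Icc {i : ℕ} (hi : i ∈ Icc 1 (k * n)) :
    (i - 1) / n < k ∧ (i - 1) % n < n ∧ (i - 1) / n * n + (i - 1) % n + 1 = i := by
  rw [mem_Icc] at hi
  have hn : 0 < n := Nat.pos_of_ne_zero (by rintro rfl; omega)
  refine ⟨(Nat.div_lt_iff_lt_mul hn).mpr (by omega), Nat.mod_lt _ hn, ?_⟩
  rw [Nat.div_add_mod']
  omega

lemma card_shuffle_inversions_eq_card_product :
    #{p ∈ Icc 1 (k * n) ×ˢ Icc 1 (k * n) |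
        p.1 < p.2 ∧ k * p.2 % (k * n + 1) < k * p.1 % (k * n + 1)} =
      #({x ∈ range k ×ˢ range k | x.1 < x.2} ×ˢ {x ∈ range n ×ˢ range n | x.1 ≤ x.2}) := by
  symm
  -- `((c, d), (v, u))` ↦ `(c * n + u + 1, d * n + v + 1)`
  refine card_nbij' (fun x => (x.1.1 * n + x.2.2 + 1, x.1.2 * n + x.2.1 + 1))
    (fun p => (((p.1 - 1) / n, (p.2 - 1) / n), ((p.2 - 1) % n, (p.1 - 1) % n))) ?_ ?_ ?_ ?_
  · rintro ⟨⟨c, d⟩, ⟨v, u⟩⟩ hx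
    simp only [mem_coe, mem_product, mem_filter, mem_range] at hx
    obtain ⟨⟨⟨hc, hd⟩, hcd⟩, ⟨hv, hu⟩, hvu⟩ := hx
    simp only [mem_coe, mem_filter, mem_product]
    exact ⟨⟨mul_add_one_mem_Icc hc hu, mul_add_one_mem_Icc hd hv⟩,
      (shuffle_inversion_iff hc hd hu hv).mpr ⟨hcd, hvu⟩⟩
  · rintro ⟨i, j⟩ hp
    simp only [mem_coe, mem_filter, mem_product] at hp
    obtain ⟨⟨hi, hj⟩, hinv⟩ := hp
    obtain ⟨hc, hu, hi_eq⟩ := digits_of_mem_Icc hi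
    obtain ⟨hd, hv, hj_eq⟩ := digits_of_mem_Icc hj
    rw [← hi_eq, ← hj_eq] at hinv
    obtain ⟨hcd, hvu⟩ := (shuffle_inversion_iff hc hd hu hv).mp hinv
    simp only [mem_coe, mem_product, mem_filter, mem_range]
    exact ⟨⟨⟨hc, hd⟩, hcd⟩, ⟨hv, hu⟩, hvu⟩
  · rintro ⟨⟨c, d⟩, ⟨v, u⟩⟩ hx
    simp only [mem_coe, mem_product, mem_filter, mem_range] at hx
    obtain ⟨-, ⟨hv, hu⟩, -⟩ := hx
    simp only [Nat.add_sub_cancel, Nat.mul_add_div_of_lt hu, Nat.mul_add_div_of_lt hv,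
      Nat.mul_add_mod_of_lt hu, Nat.mul_add_mod_of_lt hv]
  · rintro ⟨i, j⟩ hp
    simp only [mem_coe, mem_filter, mem_product] at hp
    simp only [(digits_of_mem_Icc hp.1.1).2.2, (digits_of_mem_Icc hp.1.2).2.2]

end PerfectShuffle

theorem perfect_shuffle_inversions_general (k n : ℕ) :
    ((Finset.Icc 1 (k * n) ×ˢ Finset.Icc 1 (k * n)).filter
        (fun p : ℕ × ℕ => p.1 < p.2 ∧ k * p.2 % (k * n + 1) < k * p.1 % (k * n + 1))).card =
      (k - 1) * k / 2 * (n * (n + 1) / 2) := by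
  rw [card_shuffle_inversions_eq_card_product, card_product, card_product_filter_lt,
    card_product_filter_le, card_range, card_range, Nat.choose_two_right, Nat.choose_two_right,
    Nat.add_sub_cancel, Nat.mul_comm k, Nat.mul_comm (n + 1)]

theorem perfect_shuffle_inversions (k n : ℕ) (hk : 2 ≤ k) (hn : 1 ≤ n) :
    ((Finset.Icc 1 (k * n) ×ˢ Finset.Icc 1 (k * n)).filter
        (fun p : ℕ × ℕ => p.1 < p.2 ∧ k * p.2 % (k * n + 1) < k * p.1 % (k * n + 1))).card =
      (k - 1) * k / 2 * (n * (n + 1) / 2) :=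
  perfect_shuffle_inversions_general k n
end

section
/- Let k ≥ 2 and n ≥ 1 be integers. If k ≡ 0 (mod 4) or k ≡ 1 (mod 4), then the signature of the (k,n)-perfect shuffle permutation σ_{k,n} equals 1; if k ≡ 2 (mod 4) or k ≡ 3 (mod 4), then the signature of σ_{k,n} equals −1 when n ≡ 1 or 2 (mod 4) and equals 1 when n ≡ 0 or 3 (mod 4). -/
/-!
Shift `{1, …, kn}` down to `{0, …, kn - 1}` and write its points as `n j + r` with `j < k`,
`r < n`. Since `k (n j + r + 1) = j (kn + 1) + k r + (k - j)`, the shuffle sends `n j + r` to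
`k r + (k - 1 - j)`: it swaps the two mixed-radix digits and reverses one of them. Hence
`n j + r < n j' + r'` is an inversion iff `j < j'` and `r' ≤ r`, so there are
`C(k, 2) · C(n + 1, 2)` inversions, and the parity of `C(m, 2)` only depends on `m mod 4`.
-/

open Equiv Finset

theorem Equiv.Perm.sign_eq_signAux {N : ℕ} (σ : Perm (Fin N)) : sign σ = signAux σ := by
  induction σ using Perm.swap_induction_on with
  | one => simp
  | swap_mul f x y hxy ih =>
    rw [Perm.sign_mul, Perm.signAux_mul, ih, Perm.sign_swap hxy, Perm.signAux_swap hxy]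

theorem Equiv.Perm.sign_eq_neg_one_pow_card_inversions {N : ℕ} (σ : Perm (Fin N)) :
    sign σ = (-1) ^ #{p : Fin N × Fin N | p.1 < p.2 ∧ σ p.2 < σ p.1} := by
  rw [sign_eq_signAux, signAux, prod_ite, prod_const, prod_const, one_pow, mul_one]
  congr 1
  refine card_nbij' (fun x => (x.2, x.1)) (fun p => ⟨p.2, p.1⟩) ?_ ?_
    (fun _ _ => rfl) (fun _ _ => rfl)
  · intro x hx
    simp only [coe_filter, mem_finPairsLT, mem_univ, true_and] at hx ⊢
    exact ⟨hx.1, lt_of_le_of_ne hx.2 (σ.injective.ne hx.1.ne')⟩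
  · intro p hp
    simp only [coe_filter, mem_finPairsLT, mem_univ, true_and] at hp ⊢
    exact ⟨hp.1, hp.2.le⟩

theorem Finset.card_product_filter_ge {α : Type*} [LinearOrder α] (s : Finset α) :
    #{x ∈ s ×ˢ s | x.2 ≤ x.1} = (#s + 1).choose 2 := by
  have hsplit : {x ∈ s ×ˢ s | x.2 ≤ x.1} = {x ∈ s ×ˢ s | x.2 < x.1} ∪ s.diag := by grind
  have hswap : #{x ∈ s ×ˢ s | x.2 < x.1} = #{x ∈ s ×ˢ s | x.1 < x.2} :=
    card_equiv (Equiv.prodComm α α) (by grind)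
  rw [hsplit, card_union_of_disjoint (by grind [disjoint_left]), hswap, card_product_filter_lt,
    diag_card, Nat.choose_succ_succ', Nat.choose_one_right, add_comm]

theorem Nat.even_choose_two_iff (m : ℕ) : Even (m.choose 2) ↔ m % 4 = 0 ∨ m % 4 = 1 := by
  induction m using Nat.strong_induction_on with
  | _ m ih =>
    rcases lt_or_ge m 4 with hm | hm
    · interval_cases m <;> decide
    · obtain ⟨m, rfl⟩ := Nat.exists_eq_add_of_le' hm
      have hstep : (m + 4).choose 2 = m.choose 2 + 2 * (2 * m + 3) := by
        simp only [Nat.choose_succ_succ', Nat.choose_zero_right, zero_add, Nat.choose_one_right]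
        ring
      rw [hstep, Nat.even_add, ih m (by omega)]
      simp only [even_two, Even.mul_right, iff_true]
      omega

theorem Nat.add_mul_lt_add_mul_iff {n a b c d : ℕ} (ha : a < n) (hb : b < n) :
    a + n * c < b + n * d ↔ c < d ∨ c = d ∧ a < b := by
  rcases lt_trichotomy c d with h | rfl | h
  · have : n * (c + 1) ≤ n * d := Nat.mul_le_mul_left n h
    simp only [h, true_or, iff_true]
    rw [mul_add_one] at this; omega
  · simp
  · have : n * (d + 1) ≤ n * c := Nat.mul_le_mul_left n h
    simp only [h.not_gt, h.ne', false_or, false_and, iff_false]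
    rw [mul_add_one] at this; omega

def iccOneEquivFin (N : ℕ) : {x // x ∈ Icc 1 N} ≃ Fin N where
  toFun x := ⟨x - 1, by grind⟩
  invFun i := ⟨i + 1, by grind⟩
  left_inv x := by grind
  right_inv i := by grind

theorem shuffle_mod_eq {k n j r : ℕ} (hj : j < k) (hr : r < n) :
    k * (r + n * j + 1) % (k * n + 1) = k - (j + 1) + k * r + 1 := by
  obtain ⟨m, rfl⟩ : ∃ m, k = j + 1 + m := ⟨k - (j + 1), by omega⟩
  have hdecomp : (j + 1 + m) * (r + n * j + 1) =
      (m + (j + 1 + m) * r + 1) + ((j + 1 + m) * n + 1) * j := by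
    ring
  have hlt : (j + 1 + m) * (r + 1) ≤ (j + 1 + m) * n := Nat.mul_le_mul_left _ hr
  rw [hdecomp, Nat.add_mul_mod_self_left, Nat.mod_eq_of_lt (by rw [mul_add_one] at hlt; omega)]
  omega

noncomputable def shuffleFin (k n : ℕ) : Equiv.Perm (Fin (k * n)) :=
  (iccOneEquivFin (k * n)).permCongr (pshuffle k n)

theorem shuffleFin_finProdFinEquiv (k n : ℕ) (j : Fin k) (r : Fin n) :
    (shuffleFin k n (finProdFinEquiv (j, r)) : ℕ) = j.rev + k * r := by
  simp [shuffleFin, permCongr_apply, iccOneEquivFin, pshuffle, shuffleFun, shuffle_mod_eq j.2 r.2]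

theorem shuffleFin_inversion_iff (k n : ℕ) (j j' : Fin k) (r r' : Fin n) :
    (finProdFinEquiv (j, r) < finProdFinEquiv (j', r') ∧
      shuffleFin k n (finProdFinEquiv (j', r')) < shuffleFin k n (finProdFinEquiv (j, r))) ↔
      j < j' ∧ r' ≤ r := by
  rw [Fin.lt_def, Fin.lt_def, shuffleFin_finProdFinEquiv, shuffleFin_finProdFinEquiv,
    finProdFinEquiv_apply_val, finProdFinEquiv_apply_val, Nat.add_mul_lt_add_mul_iff r.2 r'.2,
    Nat.add_mul_lt_add_mul_iff j'.rev.2 j.rev.2, Fin.val_rev, Fin.val_rev]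
  simp only [Fin.lt_def, Fin.le_def]
  omega

theorem card_inversions_shuffleFin (k n : ℕ) :
    #{p : Fin (k * n) × Fin (k * n) | p.1 < p.2 ∧ shuffleFin k n p.2 < shuffleFin k n p.1} =
      k.choose 2 * (n + 1).choose 2 :=
  calc _ = #{q : (Fin k × Fin n) × (Fin k × Fin n) | q.1.1 < q.2.1 ∧ q.2.2 ≤ q.1.2} :=
        (card_equiv (finProdFinEquiv.prodCongr finProdFinEquiv)
          (by simp [shuffleFin_inversion_iff])).symm
    _ = #{x : Fin k × Fin k | x.1 < x.2} * #{x : Fin n × Fin n | x.2 ≤ x.1} := by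
        rw [← card_product]
        exact card_equiv (Equiv.prodProdProdComm _ _ _ _) (by simp)
    _ = k.choose 2 * (n + 1).choose 2 := by
        rw [← univ_product_univ, card_product_filter_lt, ← univ_product_univ,
          card_product_filter_ge, card_fin, card_fin]

theorem sign_pshuffle (k n : ℕ) :
    Perm.sign (pshuffle k n) = (-1) ^ (k.choose 2 * (n + 1).choose 2) := by
  rw [← Perm.sign_permCongr (iccOneEquivFin (k * n)), ← shuffleFin,
    Perm.sign_eq_neg_one_pow_card_inversions, card_inversions_shuffleFin]

theorem perfect_shuffle_sign_general (k n : ℕ) :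
    ((k % 4 = 0 ∨ k % 4 = 1) → Equiv.Perm.sign (pshuffle k n) = 1) ∧
    ((k % 4 = 2 ∨ k % 4 = 3) →
      ((n % 4 = 1 ∨ n % 4 = 2) → Equiv.Perm.sign (pshuffle k n) = -1) ∧
      ((n % 4 = 0 ∨ n % 4 = 3) → Equiv.Perm.sign (pshuffle k n) = 1)) := by
  have odd_choose_two {m : ℕ} (hm : m % 4 = 2 ∨ m % 4 = 3) : Odd (m.choose 2) := by
    rw [← Nat.not_even_iff_odd, Nat.even_choose_two_iff]; omega
  rw [sign_pshuffle]
  refine ⟨fun hk => ?_, fun hk => ⟨fun hn => ?_, fun hn => ?_⟩⟩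
  · exact (((Nat.even_choose_two_iff k).2 hk).mul_right _).neg_one_pow
  · exact ((odd_choose_two hk).mul (odd_choose_two (by omega))).neg_one_pow
  · exact (((Nat.even_choose_two_iff (n + 1)).2 (by omega)).mul_left _).neg_one_pow

theorem perfect_shuffle_sign (k n : ℕ) (hk : 2 ≤ k) (hn : 1 ≤ n) :
    ((k % 4 = 0 ∨ k % 4 = 1) → Equiv.Perm.sign (pshuffle k n) = 1) ∧
    ((k % 4 = 2 ∨ k % 4 = 3) →
      ((n % 4 = 1 ∨ n % 4 = 2) → Equiv.Perm.sign (pshuffle k n) = -1) ∧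
      ((n % 4 = 0 ∨ n % 4 = 3) → Equiv.Perm.sign (pshuffle k n) = 1)) :=
  perfect_shuffle_sign_general k n
end

section
/- Let k ≥ 2 and n ≥ 1 be integers. Then the following are equivalent: (1) the (k,n)-perfect shuffle permutation σ_{k,n} is a single cycle of length kn (equivalently C_k(n) = 1); (2) kn+1 is a prime number and k is a primitive root modulo kn+1; (3) the multiplicative order of k modulo kn+1 equals kn. -/
/-!
Reducing mod `k * n + 1` identifies `{1, …, k * n}` with the nonzero residues and turns `σ_{k,n}`
into multiplication by `k`, so the orbit of `1` is the set of powers of `k`, which has `ord k`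
elements. Hence `σ_{k,n}` is a single cycle iff `ord k = k * n`. Since
`ord k ∣ φ (k * n + 1) ≤ k * n`, with equality in the last step only for primes, this is also
equivalent to `k * n + 1` being prime with `k` a primitive root.
-/

lemma cycleCount_eq_one_iff {α : Type*} (σ : Equiv.Perm α) (x : α) :
    cycleCount σ = 1 ↔ ∀ y, σ.SameCycle x y := by
  rw [cycleCount, Nat.card_eq_one_iff_unique]
  refine ⟨fun ⟨h, _⟩ y => Quotient.exact (h.elim ⟦x⟧ ⟦y⟧), fun h =>
    ⟨⟨?_⟩, ⟨⟦x⟧⟩⟩⟩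
  rintro ⟨y⟩ ⟨z⟩
  exact Quotient.sound (((h y).symm.trans (h z) : σ.SameCycle y z))

lemma forall_ne_zero_exists_pow_eq_iff {M : Type*} [MonoidWithZero M] [Nontrivial M] [Finite M]
    (u : Mˣ) :
    (∀ b : M, b ≠ 0 → ∃ i : ℕ, (u : M) ^ i = b) ↔ orderOf (u : M) = Nat.card M - 1 := by
  set S := Set.range fun i : ℕ => (u : M) ^ i
  have hS : S = Units.val '' (Submonoid.powers u : Set Mˣ) := by
    ext b
    simp [S, Submonoid.mem_powers_iff]
  have hS_card : S.ncard = orderOf (u : M) := by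
    rw [hS, Set.ncard_image_of_injective _ Units.val_injective, ← Nat.card_coe_set_eq,
      SetLike.coe_sort_coe, Nat.card_submonoidPowers, orderOf_units]
  have hS_sub : S ⊆ {0}ᶜ := by
    rintro _ ⟨i, rfl⟩
    simpa using (u ^ i).ne_zero
  have hT_card : ({0}ᶜ : Set M).ncard = Nat.card M - 1 := by
    rw [Set.ncard_compl, Set.ncard_singleton]
  change {0}ᶜ ⊆ S ↔ _
  rw [← hS_card, ← hT_card]
  exact ⟨fun h => congrArg Set.ncard (hS_sub.antisymm h),
    fun h => (Set.eq_of_subset_of_ncard_le hS_sub h.ge).symm.subset⟩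

lemma ZMod.orderOf_eq_iff_prime_and_orderOf_eq_totient {m : ℕ} (u : (ZMod (m + 1))ˣ) :
    orderOf (u : ZMod (m + 1)) = m ↔
      (m + 1).Prime ∧ orderOf (u : ZMod (m + 1)) = Nat.totient (m + 1) := by
  rw [orderOf_units]
  refine ⟨fun h => ?_, fun ⟨hp, h⟩ => by rw [h, Nat.totient_prime hp, Nat.add_sub_cancel]⟩
  have hm : 0 < m := h ▸ orderOf_pos u
  have h_dvd : orderOf u ∣ Nat.totient (m + 1) := orderOf_dvd_of_pow_eq_one (ZMod.pow_totient u)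
  have h_le : orderOf u ≤ Nat.totient (m + 1) :=
    Nat.le_of_dvd (Nat.totient_pos.2 m.succ_pos) h_dvd
  have h_lt : Nat.totient (m + 1) < m + 1 := Nat.totient_lt (m + 1) (by omega)
  have h_eq : Nat.totient (m + 1) = m := by omega
  exact ⟨(Nat.totient_eq_iff_prime m.succ_pos).1 (by simpa using h_eq), by omega⟩

lemma ZMod.forall_natCast_Icc_iff {m : ℕ} {P : ZMod (m + 1) → Prop} :
    (∀ x ∈ Finset.Icc 1 m, P x) ↔ ∀ b : ZMod (m + 1), b ≠ 0 → P b := by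
  refine ⟨fun h b hb => ?_, fun h x hx => h x ?_⟩
  · have hb_val : b.val ≠ 0 := (ZMod.val_ne_zero b).2 hb
    have hb_lt := ZMod.val_lt b
    simpa using h b.val (Finset.mem_Icc.2 ⟨by omega, by omega⟩)
  · rw [Ne, ZMod.natCast_eq_zero_iff]
    have := Finset.mem_Icc.1 hx
    exact fun hdvd => absurd (Nat.le_of_dvd (by omega) hdvd) (by omega)

lemma pshuffle_pow_apply_cast (k n i : ℕ) (x : {x : ℕ // x ∈ Finset.Icc 1 (k * n)}) :
    (((pshuffle k n ^ i) x : ℕ) : ZMod (k * n + 1)) = (k : ZMod (k * n + 1)) ^ i * (x : ℕ) := by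
  induction i with
  | zero => simp
  | succ i ih =>
    rw [pow_succ', Equiv.Perm.mul_apply, pow_succ', mul_assoc, ← ih]
    change ((k * _ % (k * n + 1) : ℕ) : ZMod (k * n + 1)) = _
    rw [ZMod.natCast_mod, Nat.cast_mul]

lemma pshuffle_sameCycle_iff (k n : ℕ) (x y : {x : ℕ // x ∈ Finset.Icc 1 (k * n)}) :
    (pshuffle k n).SameCycle x y ↔
      ∃ i : ℕ, (k : ZMod (k * n + 1)) ^ i * (x : ℕ) = (y : ℕ) := by
  have h_inj : ∀ a b : {x : ℕ // x ∈ Finset.Icc 1 (k * n)},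
      ((a : ℕ) : ZMod (k * n + 1)) = (b : ℕ) → a = b := fun a b h => by
    have ha := Finset.mem_Icc.1 a.2
    have hb := Finset.mem_Icc.1 b.2
    exact Subtype.ext
      (((ZMod.natCast_eq_natCast_iff _ _ _).1 h).eq_of_lt_of_lt (by omega) (by omega))
  constructor
  · intro h
    obtain ⟨i, -, rfl⟩ := h.exists_pow_eq'
    exact ⟨i, (pshuffle_pow_apply_cast k n i x).symm⟩
  · rintro ⟨i, hi⟩
    exact ⟨i, by rw [zpow_natCast]; exact h_inj _ _ (by rw [pshuffle_pow_apply_cast, hi])⟩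

theorem perfect_shuffle_single_cycle_iff (k n : ℕ) (hk : 2 ≤ k) (hn : 1 ≤ n) :
    (cycleCount (pshuffle k n) = 1 ↔
      Nat.Prime (k * n + 1) ∧ orderOf (k : ZMod (k * n + 1)) = Nat.totient (k * n + 1)) ∧
    (cycleCount (pshuffle k n) = 1 ↔ orderOf (k : ZMod (k * n + 1)) = k * n) := by
  have hkn : 1 ≤ k * n := Nat.mul_pos (by omega) hn
  have : Fact (1 < k * n + 1) := ⟨by omega⟩
  have hco : k.Coprime (k * n + 1) :=
    ((Nat.coprime_mul_left_add_left 1 k n).2 (Nat.coprime_one_left k)).symm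
  rw [← ZMod.coe_unitOfCoprime k hco]
  have key : cycleCount (pshuffle k n) = 1 ↔
      orderOf ((ZMod.unitOfCoprime k hco : (ZMod (k * n + 1))ˣ) : ZMod (k * n + 1)) = k * n := by
    rw [cycleCount_eq_one_iff _ ⟨1, Finset.mem_Icc.2 ⟨le_rfl, hkn⟩⟩, Subtype.forall]
    simp only [pshuffle_sameCycle_iff, Nat.cast_one, mul_one]
    rw [ZMod.forall_natCast_Icc_iff (P := fun b => ∃ i : ℕ, (k : ZMod (k * n + 1)) ^ i = b),
      ← ZMod.coe_unitOfCoprime k hco, forall_ne_zero_exists_pow_eq_iff, Nat.card_zmod,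
      Nat.add_sub_cancel]
  exact ⟨key.trans (ZMod.orderOf_eq_iff_prime_and_orderOf_eq_totient _), key⟩
end

section
/- Let n ≥ 2 be an integer such that 2n+1 is prime and the multiplicative order of 2 modulo 2n+1 equals 2n. Then n ≡ 1 (mod 4) or n ≡ 2 (mod 4); moreover, if n ≡ 1 (mod 4) then the multiplicative order of −2 modulo 2n+1 is strictly less than 2n, while if n ≡ 2 (mod 4) then the multiplicative order of −2 modulo 2n+1 equals 2n. -/
/-!
As `2` generates `(ZMod p)ˣ` for `p = 2n + 1`, we have `2 ^ n = -1` and `2` is a non-residue,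
so `p ≡ 3, 5 (mod 8)`, i.e. `n ≡ 1, 2 (mod 4)`. For odd `n`, `(-2) ^ n = -2 ^ n = 1`; for even `n`,
`-2 = 2 ^ (n + 1)` with `n + 1` coprime to `2n`, so `-2` is again a generator.
-/

namespace IsPrimitiveRoot

variable {R : Type*} [CommRing R] [NoZeroDivisors R] {ζ : R} {n : ℕ}

theorem pow_eq_neg_one_of_two_mul (h : IsPrimitiveRoot ζ (2 * n)) (hn : n ≠ 0) : ζ ^ n = -1 :=
  eq_neg_one_of_two_right <| by
    simpa [Nat.mul_div_cancel _ (Nat.pos_of_ne_zero hn)] using h.pow_of_dvd hn (dvd_mul_left n 2)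

theorem orderOf_neg_dvd_of_odd (h : IsPrimitiveRoot ζ (2 * n)) (hn : Odd n) : orderOf (-ζ) ∣ n :=
  orderOf_dvd_of_pow_eq_one <| by
    rw [hn.neg_pow, h.pow_eq_neg_one_of_two_mul hn.pos.ne', neg_neg]

theorem neg_of_even (h : IsPrimitiveRoot ζ (2 * n)) (hn : Even n) (hn₀ : n ≠ 0) :
    IsPrimitiveRoot (-ζ) (2 * n) := by
  have hneg : -ζ = ζ ^ (n + 1) := by rw [pow_succ, h.pow_eq_neg_one_of_two_mul hn₀, neg_one_mul]
  rw [hneg]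
  refine h.pow_of_coprime _ (Nat.Coprime.mul_right ?_ ?_)
  · exact Nat.coprime_two_right.mpr hn.add_one
  · simp

end IsPrimitiveRoot

theorem FiniteField.not_isSquare_of_isPrimitiveRoot {F : Type*} [Field F] [Fintype F]
    (hF : ringChar F ≠ 2) {a : F} (ha : IsPrimitiveRoot a (Fintype.card F - 1)) :
    ¬IsSquare a := by
  have hq : Fintype.card F - 1 = 2 * (Fintype.card F / 2) := by
    have := FiniteField.odd_card_of_char_ne_two hF
    omega
  have hhalf : Fintype.card F / 2 ≠ 0 := by
    have := Fintype.one_lt_card (α := F)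
    omega
  rw [hq] at ha
  rw [FiniteField.isSquare_iff hF (ha.ne_zero (by omega)), ha.pow_eq_neg_one_of_two_mul hhalf]
  exact Ring.neg_one_ne_one_of_char_ne_two hF

theorem orderOf_neg_two_cases_general (n : ℕ) (hp : Nat.Prime (2 * n + 1))
    (h : orderOf (2 : ZMod (2 * n + 1)) = 2 * n) :
    (n % 4 = 1 ∨ n % 4 = 2) ∧
    (n % 4 = 1 → orderOf (-2 : ZMod (2 * n + 1)) < 2 * n) ∧
    (n % 4 = 2 → orderOf (-2 : ZMod (2 * n + 1)) = 2 * n) := by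
  have := Fact.mk hp
  have hn : n ≠ 0 := by rintro rfl; exact Nat.not_prime_one hp
  have hprim : IsPrimitiveRoot (2 : ZMod (2 * n + 1)) (2 * n) := IsPrimitiveRoot.iff_orderOf.mpr h
  have hmod : n % 4 = 1 ∨ n % 4 = 2 := by
    have hsq : ¬IsSquare (2 : ZMod (2 * n + 1)) :=
      FiniteField.not_isSquare_of_isPrimitiveRoot (by rw [ZMod.ringChar_zmod_n]; omega)
        (by rwa [ZMod.card, Nat.add_sub_cancel])
    rw [ZMod.exists_sq_eq_two_iff (by omega)] at hsq
    omega
  refine ⟨hmod, fun h1 => ?_, fun h2 => ?_⟩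
  · have hdvd := hprim.orderOf_neg_dvd_of_odd (Nat.odd_iff.mpr (by omega))
    exact (Nat.le_of_dvd (Nat.pos_of_ne_zero hn) hdvd).trans_lt (by omega)
  · exact (hprim.neg_of_even (Nat.even_iff.mpr (by omega)) hn).eq_orderOf.symm

theorem orderOf_neg_two_cases (n : ℕ) (hn : 2 ≤ n) (hp : Nat.Prime (2 * n + 1))
    (h : orderOf (2 : ZMod (2 * n + 1)) = 2 * n) :
    (n % 4 = 1 ∨ n % 4 = 2) ∧
    (n % 4 = 1 → orderOf (-2 : ZMod (2 * n + 1)) < 2 * n) ∧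
    (n % 4 = 2 → orderOf (-2 : ZMod (2 * n + 1)) = 2 * n) :=
  orderOf_neg_two_cases_general n hp h
end

section
/- Let k ≥ 2 and n ≥ 1 be integers, and let f_{k,n} be the linear endomorphism of ℝ^{kn} defined on the canonical basis (e_1, …, e_{kn}) by f_{k,n}(e_j) = e_{σ_{k,n}(j)} for every j ∈ {1, …, kn}. Then the characteristic polynomial of f_{k,n} equals the product, over all divisors d of kn+1 with d ≠ 1, of (X^{ord_k(d)} − 1)^{φ(d)/ord_k(d)}. -/
open Polynomial
open Equiv (Perm)

theorem Equiv.Perm.isCycleOn_univ_subtypePerm {α ι : Type*} (σ : Perm α) (c : α → ι)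
    (hc : ∀ x, c (σ x) = c x) (hsame : ∀ x y, c x = c y → σ.SameCycle x y) (i : ι) :
    (σ.subtypePerm fun x => by rw [hc] : Perm {x // c x = i}).IsCycleOn _root_.Set.univ :=
  ⟨_root_.Set.bijOn_univ.mpr (Equiv.bijective _),
    fun x _ y _ => (hsame x y (x.2.trans y.2.symm)).subtypePerm⟩

namespace Matrix

variable {α β R : Type*} [Fintype α] [DecidableEq α] [CommRing R]

omit [Fintype α] in
theorem permMatrix_apply (σ : Perm α) (i j : α) :
    σ.permMatrix R i j = if σ i = j then 1 else 0 := by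
  simp [Perm.permMatrix]

theorem permMatrix_pow (σ : Perm α) (n : ℕ) : (σ ^ n).permMatrix R = σ.permMatrix R ^ n := by
  induction n with
  | zero => simp
  | succ n ih => rw [pow_succ, permMatrix_mul, ih, pow_succ']

theorem charpoly_permMatrix_eq_of_semiconj [Fintype β] [DecidableEq β] (e : α ≃ β)
    {σ : Perm α} {τ : Perm β} (h : Function.Semiconj e σ τ) :
    (σ.permMatrix R).charpoly = (τ.permMatrix R).charpoly := by
  have : σ.permMatrix R = reindex e.symm e.symm (τ.permMatrix R) := by
    ext i j
    simp [← h.eq, e.injective.eq_iff]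
  rw [this, charpoly_reindex]

theorem eq_zero_of_aeval_permMatrix_eq_zero [Nonempty α] {τ : Perm α}
    (hτ : τ.IsCycleOn Set.univ) {p : R[X]} (hp : aeval (τ.permMatrix R) p = 0)
    (hdeg : p.degree < Fintype.card α) : p = 0 := by
  obtain ⟨x⟩ := ‹Nonempty α›
  have hτ' : τ.IsCycleOn (Finset.univ : Finset α) := by simpa using hτ
  ext j
  rw [coeff_zero]
  by_cases hj : j < Fintype.card α
  · have hnat : p.natDegree < Fintype.card α := by
      rcases eq_or_ne p 0 with rfl | hp0
      · simpa using Fintype.card_pos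
      · exact (natDegree_lt_iff_degree_lt hp0).mpr hdeg
    -- row `x` of `τ ^ i` has its `1` in column `τ ^ i x`, and these differ for `i < #α`
    have hpow : ∀ i ∈ Finset.range (Fintype.card α),
        (p.coeff i • τ.permMatrix R ^ i) x ((τ ^ j) x) = if i = j then p.coeff i else 0 := by
      intro i hi
      simp only [smul_apply, ← permMatrix_pow, permMatrix_apply,
        hτ'.pow_apply_eq_pow_apply (Finset.mem_univ x), Finset.card_univ, Nat.ModEq,
        Nat.mod_eq_of_lt (Finset.mem_range.mp hi), Nat.mod_eq_of_lt hj]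
      split_ifs <;> simp
    have hentry := congrFun (congrFun hp x) ((τ ^ j) x)
    rwa [aeval_eq_sum_range' hnat, sum_apply, Finset.sum_congr rfl hpow,
      Finset.sum_ite_eq', if_pos (Finset.mem_range.mpr hj)] at hentry
  · exact coeff_eq_zero_of_degree_lt (hdeg.trans_le (by exact_mod_cast not_lt.mp hj))

theorem charpoly_permMatrix_of_isCycleOn_univ [Nontrivial R] [Nonempty α] {τ : Perm α}
    (hτ : τ.IsCycleOn Set.univ) : (τ.permMatrix R).charpoly = X ^ Fintype.card α - 1 := by
  have hτ' : τ.IsCycleOn (Finset.univ : Finset α) := by simpa using hτ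
  have hpow : τ ^ Fintype.card α = 1 := by
    ext x
    simpa using (hτ'.pow_apply_eq (Finset.mem_univ x)).mpr dvd_rfl
  have hmonic : (X ^ Fintype.card α - 1 : R[X]).Monic := monic_X_pow_sub_C 1 Fintype.card_ne_zero
  have hdeg : (τ.permMatrix R).charpoly.degree = Fintype.card α := by
    rw [degree_eq_natDegree (charpoly_monic _).ne_zero, charpoly_natDegree_eq_dim]
  -- by Cayley–Hamilton both sides annihilate the matrix, and their difference has degree `< #α`
  rw [← sub_eq_zero]
  refine eq_zero_of_aeval_permMatrix_eq_zero hτ ?_ ?_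
  · simp [aeval_self_charpoly, ← permMatrix_pow, hpow]
  · rw [← hdeg]
    refine degree_sub_lt_left ?_ (charpoly_monic _).ne_zero ?_
    · rw [hdeg, ← C_1, degree_X_pow_sub_C Fintype.card_pos]
    · rw [(charpoly_monic _).leadingCoeff, hmonic.leadingCoeff]

theorem charpoly_permMatrix_eq_prod_subtypePerm {ι : Type*} [LinearOrder ι] (σ : Perm α)
    (c : α → ι) (hc : ∀ x, c (σ x) = c x) :
    (σ.permMatrix R).charpoly = ∏ i ∈ Finset.univ.image c,
      ((σ.subtypePerm fun x => by rw [hc] : Perm {x // c x = i}).permMatrix R).charpoly := by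
  have hblock : (σ.permMatrix R).BlockTriangular c := by
    intro x y hxy
    rw [permMatrix_apply, if_neg]
    rintro rfl
    exact (hc x ▸ hxy).false
  rw [hblock.charpoly]
  refine Finset.prod_congr rfl fun i _ => congrArg charpoly ?_
  ext x y
  simp [toSquareBlock_def, Subtype.ext_iff]

theorem charpoly_permMatrix_eq_prod_of_sameCycle [Nontrivial R] {ι : Type*} [LinearOrder ι]
    (σ : Perm α) (c : α → ι) (hc : ∀ x, c (σ x) = c x)
    (hsame : ∀ x y, c x = c y → σ.SameCycle x y) :
    (σ.permMatrix R).charpoly =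
      ∏ i ∈ Finset.univ.image c, (X ^ Fintype.card {x // c x = i} - 1) := by
  rw [charpoly_permMatrix_eq_prod_subtypePerm σ c hc]
  refine Finset.prod_congr rfl fun i hi => ?_
  obtain ⟨x, -, rfl⟩ := Finset.mem_image.mp hi
  have : Nonempty {y // c y = c x} := ⟨⟨x, rfl⟩⟩
  exact charpoly_permMatrix_of_isCycleOn_univ (σ.isCycleOn_univ_subtypePerm c hc hsame _)

theorem charpoly_permMatrix_of_pow_apply_eq_self_iff [Nontrivial R] (σ : Perm α) {r : ℕ}
    (hσ : ∀ x n, (σ ^ n) x = x ↔ r ∣ n) :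
    (σ.permMatrix R).charpoly = (X ^ r - 1) ^ (Fintype.card α / r) := by
  classical
  let orbit (x : α) : Fin _ := Fintype.equivFin (Quotient (Perm.SameCycle.setoid σ)) ⟦x⟧
  have horbit : ∀ x, orbit (σ x) = orbit x := fun x =>
    congrArg (Fintype.equivFin _) (Quotient.sound (s := Perm.SameCycle.setoid σ)
      (Perm.SameCycle.refl σ x).apply_left)
  have hsame : ∀ x y, orbit x = orbit y → σ.SameCycle x y := fun x y hxy =>
    Quotient.exact ((Fintype.equivFin _).injective hxy)
  have hcard : ∀ x, Fintype.card {y // orbit y = orbit x} = r := by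
    intro x
    have hcycle := σ.isCycleOn_univ_subtypePerm orbit horbit hsame (orbit x)
    rw [← Finset.coe_univ] at hcycle
    have hperiod := fun n => hcycle.pow_apply_eq (Finset.mem_univ ⟨x, rfl⟩) (n := n)
    simp only [Perm.subtypePerm_pow, Perm.subtypePerm_apply, Subtype.mk.injEq, hσ,
      Finset.card_univ] at hperiod
    exact Nat.dvd_antisymm ((hperiod _).mp dvd_rfl) ((hperiod _).mpr dvd_rfl)
  have hsum : Fintype.card α = (Finset.univ.image orbit).card * r := by
    rw [← Finset.card_univ, Finset.card_eq_sum_card_image orbit, Finset.sum_const_nat]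
    rintro _ hω
    obtain ⟨x, -, rfl⟩ := Finset.mem_image.mp hω
    rw [← hcard x, Fintype.card_subtype]
  rw [charpoly_permMatrix_eq_prod_of_sameCycle σ orbit horbit hsame,
    Finset.prod_congr rfl fun ω hω => ?_, Finset.prod_const]
  · rcases Nat.eq_zero_or_pos r with rfl | hr
    · have : IsEmpty α := Fintype.card_eq_zero_iff.mp (hsum.trans (mul_zero _))
      simp
    · rw [hsum, Nat.mul_div_cancel _ hr]
  · obtain ⟨x, -, rfl⟩ := Finset.mem_image.mp hω
    rw [hcard x]

end Matrix

theorem LinearMap.charpoly_eq_charpoly_permMatrix {α R : Type*} [Fintype α] [DecidableEq α]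
    [CommRing R] (σ : Perm α) {f : (α → R) →ₗ[R] α → R}
    (hf : ∀ j, f (Pi.single j 1) = Pi.single (σ j) 1) :
    f.charpoly = (σ.permMatrix R).charpoly := by
  rw [← LinearMap.charpoly_toMatrix f (Pi.basisFun R α), ← Matrix.charpoly_transpose,
    LinearMap.toMatrix_eq_toMatrix']
  congr 1
  ext i j
  simp [LinearMap.toMatrix'_apply, hf, Pi.single_apply, eq_comm]

theorem addOrderOf_units_mul {M : Type*} [Semiring M] (u : Mˣ) (a : M) :
    addOrderOf ((u : M) * a) = addOrderOf a :=
  addOrderOf_injective (AddMonoidHom.mulLeft (u : M)) u.isUnit.mul_right_injective a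

def Units.mulLeftNonzero {M : Type*} [MonoidWithZero M] (u : Mˣ) : Perm {a : M // a ≠ 0} :=
  u.mulLeft.subtypePerm fun a => by simp

theorem Units.coe_mulLeftNonzero_pow_apply {M : Type*} [MonoidWithZero M] (u : Mˣ) (n : ℕ)
    (a : {a : M // a ≠ 0}) : ((u.mulLeftNonzero ^ n) a : M) = ((u ^ n : Mˣ) : M) * a := by
  induction n with
  | zero => simp
  | succ n ih => rw [pow_succ', Perm.mul_apply, pow_succ', Units.val_mul, mul_assoc, ← ih]; rfl

namespace ZMod

theorem natCast_pow_mul_eq_self_iff {m : ℕ} (k n : ℕ) (a : ZMod m) :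
    (k : ZMod m) ^ n * a = a ↔ orderOf (k : ZMod (addOrderOf a)) ∣ n := by
  rw [orderOf_dvd_iff_pow_eq_one, ← sub_eq_zero (b := (1 : ZMod _)), ← sub_eq_zero,
    ← sub_one_mul]
  have h := (intCast_zmod_eq_zero_iff_dvd ((k : ℤ) ^ n - 1) (addOrderOf a)).trans
    (addOrderOf_dvd_iff_zsmul_eq_zero (x := a))
  push_cast [zsmul_eq_mul] at h
  exact h.symm

open Matrix in
theorem charpoly_permMatrix_mulLeftNonzero (R : Type*) [CommRing R] [Nontrivial R] {m k : ℕ}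
    [NeZero m] (hk : k.Coprime m) :
    ((unitOfCoprime k hk).mulLeftNonzero.permMatrix R).charpoly =
      ∏ d ∈ m.divisors.filter (· ≠ 1),
        (X ^ orderOf (k : ZMod d) - 1) ^ (d.totient / orderOf (k : ZMod d)) := by
  set μ := (unitOfCoprime k hk).mulLeftNonzero
  let c (a : {a : ZMod m // a ≠ 0}) : ℕ := addOrderOf a.1
  have hc : ∀ a, c (μ a) = c a := fun a => addOrderOf_units_mul _ _
  have hfiber : ∀ d ∈ m.divisors.filter (· ≠ 1),
      Fintype.card {a // c a = d} = d.totient := by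
    intro d hd
    obtain ⟨⟨hdm, -⟩, hd1⟩ := by simpa using hd
    have hne : ∀ {a : ZMod m}, addOrderOf a = d → a ≠ 0 := by
      rintro a ha rfl
      exact hd1 (ha ▸ addOrderOf_zero)
    rw [Fintype.card_congr (Equiv.subtypeSubtypeEquivSubtype hne), Fintype.card_subtype,
      IsAddCyclic.card_addOrderOf_eq_totient (by rwa [ZMod.card])]
  have himage : Finset.univ.image c = m.divisors.filter (· ≠ 1) := by
    ext d
    refine ⟨fun hd => ?_, fun hd => ?_⟩
    · obtain ⟨a, -, rfl⟩ := Finset.mem_image.mp hd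
      simp only [Finset.mem_filter, Nat.mem_divisors, ne_eq, NeZero.ne m, not_false_eq_true,
        and_true]
      exact ⟨ZMod.card m ▸ addOrderOf_dvd_card, mt AddMonoid.addOrderOf_eq_one_iff.mp a.2⟩
    · have hpos : 0 < Fintype.card {a // c a = d} := by
        rw [hfiber d hd]
        exact Nat.totient_pos.mpr (Nat.pos_of_mem_divisors (Finset.mem_filter.mp hd).1)
      obtain ⟨a, rfl⟩ := Fintype.card_pos_iff.mp hpos
      exact Finset.mem_image_of_mem c (Finset.mem_univ a)
  have hperiod : ∀ d (y : {a // c a = d}) n,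
      ((μ.subtypePerm fun a => by rw [hc]) ^ n) y = y ↔ orderOf (k : ZMod d) ∣ n := by
    rintro d ⟨⟨a, _⟩, rfl⟩ n
    rw [Perm.subtypePerm_pow, Subtype.ext_iff, Perm.subtypePerm_apply, Subtype.ext_iff,
      Units.coe_mulLeftNonzero_pow_apply, Units.val_pow_eq_pow_val, coe_unitOfCoprime]
    exact natCast_pow_mul_eq_self_iff k n a
  rw [charpoly_permMatrix_eq_prod_subtypePerm μ c hc, himage]
  refine Finset.prod_congr rfl fun d hd => ?_
  rw [charpoly_permMatrix_of_pow_apply_eq_self_iff _ (hperiod d), hfiber d hd]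

end ZMod

def iccOneEquivZModNeZero (N : ℕ) :
    {x : ℕ // x ∈ Finset.Icc 1 N} ≃ {a : ZMod (N + 1) // a ≠ 0} where
  toFun x := ⟨x.1, by
    obtain ⟨h1, hN⟩ := Finset.mem_Icc.mp x.2
    rw [Ne, ZMod.natCast_eq_zero_iff]
    exact fun h => absurd (Nat.le_of_dvd (by omega) h) (by omega)⟩
  invFun a := ⟨a.1.val, Finset.mem_Icc.mpr
    ⟨Nat.pos_of_ne_zero ((ZMod.val_ne_zero _).mpr a.2), Nat.lt_succ_iff.mp (ZMod.val_lt _)⟩⟩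
  left_inv x := Subtype.ext (ZMod.val_cast_of_lt (Nat.lt_succ_of_le (Finset.mem_Icc.mp x.2).2))
  right_inv a := Subtype.ext (ZMod.natCast_zmod_val a.1)

theorem semiconj_iccOneEquivZModNeZero_pshuffle {k n : ℕ} (hk : k.Coprime (k * n + 1)) :
    Function.Semiconj (iccOneEquivZModNeZero (k * n)) (pshuffle k n)
      (ZMod.unitOfCoprime k hk).mulLeftNonzero := by
  intro x
  ext
  change ((k * x.1 % (k * n + 1) : ℕ) : ZMod (k * n + 1)) = (k : ZMod (k * n + 1)) * x.1
  rw [ZMod.natCast_mod, Nat.cast_mul]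

theorem perfect_shuffle_charpoly_general (k n : ℕ)
    (f : ({x : ℕ // x ∈ Finset.Icc 1 (k * n)} → ℝ) →ₗ[ℝ]
      ({x : ℕ // x ∈ Finset.Icc 1 (k * n)} → ℝ))
    (hf : ∀ j, f (Pi.single j 1) = Pi.single (pshuffle k n j) 1) :
    LinearMap.charpoly f =
      ∏ d ∈ (k * n + 1).divisors.filter (· ≠ 1),
        (Polynomial.X ^ orderOf (k : ZMod d) - 1) ^
          (Nat.totient d / orderOf (k : ZMod d)) := by
  have hk : k.Coprime (k * n + 1) := by simp
  rw [LinearMap.charpoly_eq_charpoly_permMatrix _ hf,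
    Matrix.charpoly_permMatrix_eq_of_semiconj _ (semiconj_iccOneEquivZModNeZero_pshuffle hk),
    ZMod.charpoly_permMatrix_mulLeftNonzero ℝ hk]

theorem perfect_shuffle_charpoly (k n : ℕ) (hk : 2 ≤ k) (hn : 1 ≤ n)
    (f : ({x : ℕ // x ∈ Finset.Icc 1 (k * n)} → ℝ) →ₗ[ℝ]
      ({x : ℕ // x ∈ Finset.Icc 1 (k * n)} → ℝ))
    (hf : ∀ j, f (Pi.single j 1) = Pi.single (pshuffle k n j) 1) :
    LinearMap.charpoly f =
      ∏ d ∈ (k * n + 1).divisors.filter (· ≠ 1),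
        (Polynomial.X ^ orderOf (k : ZMod d) - 1) ^
          (Nat.totient d / orderOf (k : ZMod d)) :=
  perfect_shuffle_charpoly_general k n f hf
end

section
/- Let k ≥ 2 and n ≥ 1 be integers and set m = kn+1. Then the sum over all divisors d of m of φ(d)·(ord_k(m)/ord_k(d)) equals the sum over j = 0, 1, …, ord_k(m)−1 of gcd(k^j − 1, m), where gcd(0, m) = m. Equivalently, ord_k(m)·i_k(m) = Σ_{j=0}^{ord_k(m)−1} gcd(k^j − 1, m). (Here ord_k(d) divides ord_k(m) for every divisor d of m, so each term is an integer.) -/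
/-!
Write `gcd (k ^ j - 1) m = ∑ φ d` over the divisors `d ∣ m` with `d ∣ k ^ j - 1`, and exchange
the two sums. The divisor `d` then contributes `φ d` once for each `j < ord_k(m)` with
`d ∣ k ^ j - 1`, that is with `ord_k(d) ∣ j`; as `ord_k(d) ∣ ord_k(m)`, there are exactly
`ord_k(m) / ord_k(d)` such `j`.
-/

open Finset
open scoped Nat

theorem Nat.gcd_eq_sum_totient_filter_dvd {m : ℕ} (a : ℕ) (hm : m ≠ 0) :
    Nat.gcd a m = ∑ d ∈ m.divisors with d ∣ a, φ d := by
  rw [← Nat.sum_totient (Nat.gcd a m),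
    ← Nat.divisors_filter_dvd_of_dvd hm (Nat.gcd_dvd_right a m)]
  refine sum_congr (filter_congr fun d hd => ?_) fun _ _ => rfl
  rw [Nat.dvd_gcd_iff, and_iff_left (Nat.dvd_of_mem_divisors hd)]

theorem Nat.card_filter_range_dvd_of_dvd {r N : ℕ} (hr : 0 < r) (h : r ∣ N) :
    #{j ∈ range N | r ∣ j} = N / r := by
  simpa [Nat.modEq_zero_iff_dvd, Nat.count_eq_card_filter_range, Nat.mod_eq_zero_of_dvd h]
    using Nat.count_modEq_card N hr 0

namespace ZMod

theorem orderOf_natCast_dvd_totient_s12 {k d : ℕ} (h : k.Coprime d) : orderOf (k : ZMod d) ∣ φ d :=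
  orderOf_dvd_of_pow_eq_one <| by
    exact_mod_cast (natCast_eq_natCast_iff _ 1 d).2 (Nat.ModEq.pow_totient h)

theorem orderOf_natCast_dvd_of_dvd (k : ℕ) {d m : ℕ} (h : d ∣ m) :
    orderOf (k : ZMod d) ∣ orderOf (k : ZMod m) := by
  simpa using orderOf_map_dvd (castHom h (ZMod d)).toMonoidHom (k : ZMod m)

theorem orderOf_natCast_dvd_iff_dvd_pow_sub_one {k d : ℕ} (j : ℕ) (h : k.Coprime d) :
    orderOf (k : ZMod d) ∣ j ↔ d ∣ k ^ j - 1 := by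
  rcases Nat.eq_zero_or_pos k with rfl | hk
  · obtain rfl : d = 1 := Nat.coprime_zero_left d |>.1 h
    simp [Subsingleton.elim (0 : ZMod 1) 1]
  rw [orderOf_dvd_iff_pow_eq_one, ← Nat.modEq_iff_dvd' (Nat.one_le_pow j k hk), Nat.ModEq.comm,
    ← natCast_eq_natCast_iff, Nat.cast_pow, Nat.cast_one]

end ZMod

open ZMod

theorem sum_range_gcd_pow_sub_one_eq_sum_totient_mul_div {k m N : ℕ} (hkm : k.Coprime m)
    (hm : m ≠ 0) (hN : orderOf (k : ZMod m) ∣ N) :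
    ∑ j ∈ range N, Nat.gcd (k ^ j - 1) m =
      ∑ d ∈ m.divisors, φ d * (N / orderOf (k : ZMod d)) := by
  simp_rw [Nat.gcd_eq_sum_totient_filter_dvd _ hm, sum_filter]
  rw [sum_comm]
  refine sum_congr rfl fun d hd => ?_
  have hdm := Nat.dvd_of_mem_divisors hd
  have hkd : k.Coprime d := hkm.coprime_dvd_right hdm
  have hord_pos : 0 < orderOf (k : ZMod d) :=
    Nat.pos_of_dvd_of_pos (orderOf_natCast_dvd_totient_s12 hkd)
      (Nat.totient_pos.2 (Nat.pos_of_mem_divisors hd))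
  simp_rw [← orderOf_natCast_dvd_iff_dvd_pow_sub_one _ hkd]
  rw [← sum_filter, sum_const, smul_eq_mul, mul_comm,
    Nat.card_filter_range_dvd_of_dvd hord_pos ((orderOf_natCast_dvd_of_dvd k hdm).trans hN)]

theorem sum_totient_mul_ord_ratio_eq_sum_gcd_general (k n : ℕ) :
    (∀ d ∈ (k * n + 1).divisors, orderOf (k : ZMod d) ∣ orderOf (k : ZMod (k * n + 1))) ∧
    (∑ d ∈ (k * n + 1).divisors,
        Nat.totient d * (orderOf (k : ZMod (k * n + 1)) / orderOf (k : ZMod d)) =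
      ∑ j ∈ Finset.range (orderOf (k : ZMod (k * n + 1))),
        Nat.gcd (k ^ j - 1) (k * n + 1)) ∧
    (orderOf (k : ZMod (k * n + 1)) *
        ∑ d ∈ (k * n + 1).divisors, Nat.totient d / orderOf (k : ZMod d) =
      ∑ j ∈ Finset.range (orderOf (k : ZMod (k * n + 1))),
        Nat.gcd (k ^ j - 1) (k * n + 1)) := by
  set m := k * n + 1
  have hkm : k.Coprime m := by simp [m]
  have hord_dvd : ∀ d ∈ m.divisors, orderOf (k : ZMod d) ∣ orderOf (k : ZMod m) :=
    fun d hd => orderOf_natCast_dvd_of_dvd k (Nat.dvd_of_mem_divisors hd)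
  have hsum :=
    (sum_range_gcd_pow_sub_one_eq_sum_totient_mul_div hkm (k * n).succ_ne_zero dvd_rfl).symm
  refine ⟨hord_dvd, hsum, ?_⟩
  rw [mul_sum, ← hsum]
  refine sum_congr rfl fun d hd => ?_
  have hkd : k.Coprime d := hkm.coprime_dvd_right (Nat.dvd_of_mem_divisors hd)
  rw [← Nat.mul_div_assoc _ (orderOf_natCast_dvd_totient_s12 hkd),
    ← Nat.mul_div_assoc _ (hord_dvd d hd), mul_comm]

theorem sum_totient_mul_ord_ratio_eq_sum_gcd (k n : ℕ) (hk : 2 ≤ k) (hn : 1 ≤ n) :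
    (∀ d ∈ (k * n + 1).divisors, orderOf (k : ZMod d) ∣ orderOf (k : ZMod (k * n + 1))) ∧
    (∑ d ∈ (k * n + 1).divisors,
        Nat.totient d * (orderOf (k : ZMod (k * n + 1)) / orderOf (k : ZMod d)) =
      ∑ j ∈ Finset.range (orderOf (k : ZMod (k * n + 1))),
        Nat.gcd (k ^ j - 1) (k * n + 1)) ∧
    (orderOf (k : ZMod (k * n + 1)) *
        ∑ d ∈ (k * n + 1).divisors, Nat.totient d / orderOf (k : ZMod d) =
      ∑ j ∈ Finset.range (orderOf (k : ZMod (k * n + 1))),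
        Nat.gcd (k ^ j - 1) (k * n + 1)) :=
  sum_totient_mul_ord_ratio_eq_sum_gcd_general k n
end

section
/- Let a, b, m, n be positive integers with gcd(a, b) = 1 and a > b. Then gcd(a^n − b^n, a^m − b^m) = a^{gcd(m,n)} − b^{gcd(m,n)}. -/
/-!
Write `f k = a ^ k - b ^ k`. The identity `f (n + m) = a ^ n * f m + b ^ m * f n`, together with
`gcd (f m) (b ^ m) = 1`, gives `gcd (f m) (f (n + m)) = gcd (f m) (f n)`, so the gcd of two terms of
`f` runs through the Euclidean algorithm on the indices, exactly as for the Fibonacci numbers.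
-/

namespace Nat

theorem IsStrongDvdSequence.of_gcd_add_self {f : ℕ → ℕ} (h0 : f 0 = 0)
    (hadd : ∀ m n, gcd (f m) (f (n + m)) = gcd (f m) (f n)) : IsStrongDvdSequence f := by
  have hadd_mul : ∀ m n k, gcd (f m) (f (n + k * m)) = gcd (f m) (f n) := by
    intro m n k
    induction k with
    | zero => simp
    | succ k ih => rw [← ih, add_mul, one_mul, ← add_assoc, hadd]
  intro m n
  induction m, n using Nat.gcd.induction with
  | H0 n => simp [h0]
  | H1 m n _ ih =>
    rw [← gcd_rec m n] at ih
    rw [← ih, gcd_comm (f (n % m)), ← hadd_mul m (n % m) (n / m), mod_add_div']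

variable {a b : ℕ}

theorem pow_add_sub_pow_add (hba : b ≤ a) (m n : ℕ) :
    a ^ (n + m) - b ^ (n + m) = a ^ n * (a ^ m - b ^ m) + b ^ m * (a ^ n - b ^ n) := by
  have hpow : ∀ k, b ^ k ≤ a ^ k := fun k => Nat.pow_le_pow_left hba k
  zify [hpow m, hpow n, hpow (n + m)]
  ring

theorem Coprime.coprime_pow_sub_pow_pow (hco : Coprime a b) (hba : b ≤ a) (m : ℕ) :
    Coprime (a ^ m - b ^ m) (b ^ m) := by
  have h := hco.pow m m
  rwa [← Nat.sub_add_cancel (Nat.pow_le_pow_left hba m), coprime_add_self_left] at h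

theorem isStrongDvdSequence_pow_sub_pow (hco : Coprime a b) (hba : b ≤ a) :
    IsStrongDvdSequence (fun k => a ^ k - b ^ k) := by
  refine .of_gcd_add_self (by simp) fun m n => ?_
  rw [pow_add_sub_pow_add hba, gcd_mul_right_add_right,
    (hco.coprime_pow_sub_pow_pow hba m).symm.gcd_mul_left_cancel_right]

end Nat

theorem gcd_pow_sub_pow_general (a b m n : ℕ)
    (hco : Nat.Coprime a b) (hab : b < a) :
    Nat.gcd (a ^ n - b ^ n) (a ^ m - b ^ m) = a ^ Nat.gcd m n - b ^ Nat.gcd m n := by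
  rw [Nat.isStrongDvdSequence_pow_sub_pow hco hab.le n m, Nat.gcd_comm]

theorem gcd_pow_sub_pow (a b m n : ℕ) (ha : 0 < a) (hb : 0 < b) (hm : 0 < m) (hn : 0 < n)
    (hco : Nat.Coprime a b) (hab : b < a) :
    Nat.gcd (a ^ n - b ^ n) (a ^ m - b ^ m) = a ^ Nat.gcd m n - b ^ Nat.gcd m n :=
  gcd_pow_sub_pow_general a b m n hco hab
end

section
/- Let k ≥ 2 be an integer. Then i_k(kn+1) = O(n / log n) as n → ∞; that is, there exists a constant c > 0 such that for every sufficiently large integer n, Σ_{d | kn+1} φ(d)/ord_k(d) ≤ c·n/log n. (In particular the same bound holds for C_k(n) = i_k(kn+1) − 1, the number of cycles of the (k,n)-perfect shuffle permutation.) -/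
/-!
If `k` is coprime to `d`, then `d ∣ k ^ o - 1` for `o` the order of `k` modulo `d`, so
`o > log d / log k`. Split the divisors of `m = kn + 1` at `x = m ^ (1/3)`: the divisors below
`x` contribute at most `x ^ 2 = m ^ (2/3)` since each term is at most `d`, and above `x` each term
is at most `φ(d) · 3 log k / log m`, which sums to `3 m log k / log m` because `∑_{d ∣ m} φ(d) = m`.
-/

open Real

theorem Nat.Coprime.lt_pow_orderOf {k d : ℕ} (hk : 2 ≤ k) (h : k.Coprime d) :
    d < k ^ orderOf (k : ZMod d) := by
  have hd : d ≠ 0 := by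
    rintro rfl
    rw [Nat.coprime_zero_right] at h
    omega
  have : NeZero d := ⟨hd⟩
  set o := orderOf (k : ZMod d)
  have ho : 0 < o := ((ZMod.isUnit_iff_coprime k d).2 h).isOfFinOrder.orderOf_pos
  have hko : k ≤ k ^ o := Nat.le_self_pow ho.ne' k
  have hmod : k ^ o ≡ 1 [MOD d] := by
    rw [← ZMod.natCast_eq_natCast_iff, Nat.cast_pow, Nat.cast_one, pow_orderOf_eq_one]
  have := Nat.le_of_dvd (by omega) ((Nat.modEq_iff_dvd' (by omega)).1 hmod.symm)
  omega

theorem Finset.sum_filter_le_le_mul_self (s : Finset ℕ) (r : ℕ) : ∑ d ∈ s with d ≤ r, d ≤ r * r :=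
  calc ∑ d ∈ s with d ≤ r, d
      ≤ ∑ d ∈ Finset.Icc 1 r, d := Finset.sum_le_sum_of_ne_zero fun d hd hd0 => by
        simp only [Finset.mem_filter] at hd
        exact Finset.mem_Icc.2 ⟨Nat.one_le_iff_ne_zero.2 hd0, hd.2⟩
    _ ≤ ∑ _d ∈ Finset.Icc 1 r, r := Finset.sum_le_sum fun d hd => (Finset.mem_Icc.1 hd).2
    _ = r * r := by simp

theorem totient_div_orderOf_le {k d : ℕ} (hk : 2 ≤ k) (h : k.Coprime d) {x : ℝ} (hx : 1 < x)
    (hxd : x < d) :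
    ((d.totient / orderOf (k : ZMod d) : ℕ) : ℝ) ≤ d.totient * log k / log x := by
  have hlogx : 0 < log x := log_pos hx
  have hlogk : 0 < log k := log_pos (by exact_mod_cast hk)
  have hlog : log x < orderOf (k : ZMod d) * log k := by
    rw [← log_pow]
    exact log_lt_log (by linarith) (hxd.trans (by exact_mod_cast h.lt_pow_orderOf hk))
  calc ((d.totient / orderOf (k : ZMod d) : ℕ) : ℝ)
      ≤ d.totient / orderOf (k : ZMod d) := Nat.cast_div_le
    _ ≤ d.totient / (log x / log k) := by
      gcongr
      exact (div_lt_iff₀ hlogk).2 hlog |>.le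
    _ = d.totient * log k / log x := by field_simp

theorem sum_totient_div_orderOf_le {k m : ℕ} (hk : 2 ≤ k) (hkm : k.Coprime m) {x : ℝ}
    (hx : 1 < x) :
    ((∑ d ∈ m.divisors, d.totient / orderOf (k : ZMod d) : ℕ) : ℝ) ≤
      x ^ 2 + m * log k / log x := by
  set r := ⌊x⌋₊
  have hx0 : 0 ≤ x := by linarith
  rw [← Finset.sum_filter_add_sum_filter_not m.divisors (· ≤ r), Nat.cast_add]
  gcongr
  · have hsmall : ∑ d ∈ m.divisors with d ≤ r, d.totient / orderOf (k : ZMod d) ≤ r * r :=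
      (Finset.sum_le_sum fun d _ => (Nat.div_le_self _ _).trans d.totient_le).trans
        (Finset.sum_filter_le_le_mul_self _ r)
    calc ((∑ d ∈ m.divisors with d ≤ r, d.totient / orderOf (k : ZMod d) : ℕ) : ℝ)
        ≤ r * r := by exact_mod_cast hsmall
      _ ≤ x ^ 2 := by rw [sq]; gcongr <;> exact Nat.floor_le hx0
  · calc ((∑ d ∈ m.divisors with ¬d ≤ r, d.totient / orderOf (k : ZMod d) : ℕ) : ℝ)
        ≤ ∑ d ∈ m.divisors with ¬d ≤ r, d.totient * log k / log x := by
          push_cast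
          refine Finset.sum_le_sum fun d hd => ?_
          obtain ⟨hdm, hdr⟩ := Finset.mem_filter.1 hd
          exact totient_div_orderOf_le hk (hkm.coprime_dvd_right (Nat.dvd_of_mem_divisors hdm))
            hx ((Nat.floor_lt hx0).1 (not_le.1 hdr))
      _ ≤ ∑ d ∈ m.divisors, d.totient * log k / log x := by
          gcongr
          · intros; exact div_nonneg (by positivity) (log_pos hx).le
          · exact Finset.filter_subset _ _
      _ = m * log k / log x := by
          rw [← Finset.sum_div, ← Finset.sum_mul, ← Nat.cast_sum, Nat.sum_totient]

theorem log_le_rpow_one_third {x : ℝ} (hx : 3 ^ 9 ≤ x) : log x ≤ x ^ (1 / 3 : ℝ) := by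
  have hx0 : 0 < x := by linarith
  have h9 : (9 : ℝ) ≤ x ^ (2 / 9 : ℝ) := by
    calc (9 : ℝ) = ((3 : ℝ) ^ 9) ^ (2 / 9 : ℝ) := by
          rw [← rpow_natCast, ← rpow_mul (by norm_num)]; norm_num
      _ ≤ x ^ (2 / 9 : ℝ) := by gcongr
  calc log x ≤ x ^ (1 / 9 : ℝ) / (1 / 9) := log_le_rpow_div hx0.le (by norm_num)
    _ = 9 * x ^ (1 / 9 : ℝ) := by ring
    _ ≤ x ^ (2 / 9 : ℝ) * x ^ (1 / 9 : ℝ) := by gcongr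
    _ = x ^ (1 / 3 : ℝ) := by rw [← rpow_add hx0]; norm_num

theorem sum_totient_div_orderOf_le_mul_div_log {k m : ℕ} (hk : 2 ≤ k) (hkm : k.Coprime m)
    (hm : 3 ^ 9 ≤ m) :
    ((∑ d ∈ m.divisors, d.totient / orderOf (k : ZMod d) : ℕ) : ℝ) ≤
      (1 + 3 * log k) * (m / log m) := by
  have hm' : (3 : ℝ) ^ 9 ≤ m := by exact_mod_cast hm
  have hm0 : (0 : ℝ) < m := by linarith
  have hlogm : 0 < log m := log_pos (by linarith)
  have hcube : 1 < (m : ℝ) ^ (1 / 3 : ℝ) := one_lt_rpow (by linarith) (by norm_num)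
  have hsq : ((m : ℝ) ^ (1 / 3 : ℝ)) ^ 2 ≤ m / log m := by
    rw [le_div_iff₀ hlogm]
    calc ((m : ℝ) ^ (1 / 3 : ℝ)) ^ 2 * log m
        ≤ ((m : ℝ) ^ (1 / 3 : ℝ)) ^ 2 * (m : ℝ) ^ (1 / 3 : ℝ) := by
          gcongr; exact log_le_rpow_one_third hm'
      _ = (m : ℝ) := by rw [← pow_succ, ← rpow_natCast, ← rpow_mul hm0.le]; norm_num
  calc _ ≤ ((m : ℝ) ^ (1 / 3 : ℝ)) ^ 2 + m * log k / log ((m : ℝ) ^ (1 / 3 : ℝ)) :=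
        sum_totient_div_orderOf_le hk hkm hcube
    _ ≤ m / log m + m * log k / (log m / 3) := by
        rw [log_rpow hm0]; gcongr; linarith
    _ = (1 + 3 * log k) * (m / log m) := by field_simp

theorem ik_is_big_O_n_div_log_n (k : ℕ) (hk : 2 ≤ k) :
    ∃ c : ℝ, 0 < c ∧ ∃ N : ℕ, ∀ n : ℕ, N ≤ n →
      ((∑ d ∈ (k * n + 1).divisors, Nat.totient d / orderOf (k : ZMod d) : ℕ) : ℝ) ≤
        c * n / Real.log n := by
  have hlogk : 0 ≤ log k := log_nonneg (by exact_mod_cast (by omega : 1 ≤ k))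
  refine ⟨2 * k * (1 + 3 * log k), by positivity, 3 ^ 9, fun n hn => ?_⟩
  have hkm : k.Coprime (k * n + 1) := by
    rw [mul_comm, Nat.coprime_mul_right_add_right]; exact Nat.coprime_one_right k
  have hnm : n ≤ k * n + 1 := by nlinarith
  have hn' : (3 : ℝ) ^ 9 ≤ n := by exact_mod_cast hn
  have hlogn : 0 < log n := log_pos (by linarith)
  have hm_le : ((k * n + 1 : ℕ) : ℝ) ≤ 2 * k * n := by
    have : 1 ≤ k * n := Nat.one_le_iff_ne_zero.2 (by positivity)
    exact_mod_cast (by rw [mul_assoc]; omega : k * n + 1 ≤ 2 * k * n)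
  calc _ ≤ (1 + 3 * log k) * ((k * n + 1 : ℕ) / log (k * n + 1 : ℕ)) :=
        sum_totient_div_orderOf_le_mul_div_log hk hkm (hn.trans hnm)
    _ ≤ (1 + 3 * log k) * (2 * k * n / log n) := by gcongr
    _ = 2 * k * (1 + 3 * log k) * n / log n := by ring
end
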